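/- arXiv:2102.05286 — 6 statements merged into one kernel-verified Lean document; each statement's English description precedes it below -/
import Mathlib

section
/- Suppose J is continuous, bounded, nonnegative, and supported in [0, K_*]. Then there exist constants L₀ > 0 and C > 0 such that for all r ≥ L₀ and ρ ∈ [r - K_*, r + K_*], |J̃(r,ρ) - J_*(r-ρ)| ≤ C r^{-1}. -/
open MeasureTheory

/-- Surface area of the unit sphere in `ℝ^k`, i.e. `k` times the volume of the unit ball. -/
noncomputable def unitSphereArea (k : ℕ) : ℝ :=
  (k : ℝ) * (volume (Metric.ball (0 : EuclideanSpace ℝ (Fin k)) 1)).toReal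

/-!
Both integrands vanish outside `(|ρ - r|, K_*)`. There the kernel of `J̃(r, ρ)` is the integrand of
`J_*(r - ρ)` times `(ρ / r) * (((ρ + r)² - η²) / (4 r²)) ^ ((N - 3) / 2)`, and this factor is
`1 + O(1/r)` uniformly, because `ρ / r` and `((ρ + r)² - η²) / (4 r²)` both are. Since
`(N - 3) / 2 > -1`, the weight `η (η² - |ρ - r|²) ^ ((N - 3) / 2)` has an integral bounded
independently of `ρ`, so the difference is `O(1/r)`.
-/

open Set

lemma abs_integral_mul_sub_integral_le {α : Type*} [MeasurableSpace α] {μ : Measure α}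
    {g f : α → ℝ} {ε : ℝ} (hg : AEStronglyMeasurable g μ) (hf : Integrable f μ)
    (hgf : ∀ᵐ x ∂μ, |g x - 1| ≤ ε) :
    |∫ x, g x * f x ∂μ - ∫ x, f x ∂μ| ≤ ε * ∫ x, |f x| ∂μ := by
  have hgf_int : Integrable (fun x => g x * f x) μ := by
    refine hf.bdd_mul hg (c := 1 + ε) (hgf.mono fun x hx => ?_)
    have := abs_sub_abs_le_abs_sub (g x) 1
    rw [abs_one] at this
    rw [Real.norm_eq_abs]; linarith
  rw [← integral_sub hgf_int hf, ← integral_const_mul ε, ← Real.norm_eq_abs]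
  refine norm_integral_le_of_norm_le (hf.abs.const_mul ε) (hgf.mono fun x hx => ?_)
  rw [Real.norm_eq_abs, ← sub_one_mul, abs_mul]
  exact mul_le_mul_of_nonneg_right hx (abs_nonneg _)

lemma setIntegral_eq_setIntegral_Ioo_of_eq_zero {f : ℝ → ℝ} {s : Set ℝ} {b K : ℝ}
    (hs : MeasurableSet s) (hIoc : Ioc b K ⊆ s) (hsb : s ⊆ Ioi b)
    (hf : ∀ η, K < η → f η = 0) : ∫ η in s, f η = ∫ η in Ioo b K, f η := by
  rw [← integral_Ioc_eq_integral_Ioo]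
  exact setIntegral_eq_of_subset_of_forall_sdiff_eq_zero hs hIoc fun η hη =>
    hf η (lt_of_not_ge fun h => hη.2 ⟨hsb hη.1, h⟩)

lemma exists_abs_rpow_sub_one_le (q : ℝ) :
    ∃ A : ℝ, 0 ≤ A ∧ ∀ x : ℝ, |x - 1| ≤ 1 / 2 → |x ^ q - 1| ≤ A * |x - 1| := by
  have hsmooth : ContDiffOn ℝ 1 (fun x : ℝ => x ^ q) (Icc (1 / 2) (3 / 2)) := fun x hx =>
    (Real.contDiffAt_rpow_const_of_ne (by linarith [hx.1])).contDiffWithinAt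
  obtain ⟨A, hA⟩ := hsmooth.exists_lipschitzOnWith one_ne_zero (convex_Icc _ _) isCompact_Icc
  refine ⟨A, A.2, fun x hx => ?_⟩
  have hmem : ∀ y : ℝ, |y - 1| ≤ 1 / 2 → y ∈ Icc (1 / 2 : ℝ) (3 / 2) := fun y hy => by
    constructor <;> linarith [abs_le.1 hy]
  simpa [Real.dist_eq] using hA.dist_le_mul x (hmem x hx) 1 (hmem 1 (by norm_num))

lemma abs_mul_sub_one_le {u v δ ε : ℝ} (hu : |u - 1| ≤ δ) (hv : |v - 1| ≤ ε) :
    |u * v - 1| ≤ δ * (1 + ε) + ε := by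
  have hv' : |v| ≤ 1 + ε := by
    calc |v| = |(v - 1) + 1| := by ring_nf
      _ ≤ |v - 1| + 1 := by simpa using abs_add_le (v - 1) 1
      _ ≤ 1 + ε := by linarith
  calc |u * v - 1| = |(u - 1) * v + (v - 1)| := by ring_nf
    _ ≤ |u - 1| * |v| + |v - 1| := by rw [← abs_mul]; exact abs_add_le _ _
    _ ≤ δ * (1 + ε) + ε := by gcongr; exact (abs_nonneg _).trans hu

lemma abs_sq_sub_sq_div_sub_one_le {K r ρ η : ℝ} (hr : 1 ≤ r) (hρ : |ρ - r| ≤ K)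
    (hη : |η| ≤ K) : |((ρ + r) ^ 2 - η ^ 2) / (4 * r ^ 2) - 1| ≤ (K + K ^ 2) / r := by
  have hr0 : 0 < r := by linarith
  have hsplit : ((ρ + r) ^ 2 - η ^ 2) / (4 * r ^ 2) - 1
      = (ρ - r) / r + ((ρ - r) ^ 2 - η ^ 2) / (4 * r ^ 2) := by
    field_simp; ring
  have hsq : |(ρ - r) ^ 2 - η ^ 2| ≤ K ^ 2 := by
    rw [abs_le]
    constructor <;> nlinarith [sq_abs (ρ - r), sq_abs η, abs_nonneg (ρ - r), abs_nonneg η]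
  rw [hsplit]
  calc _ ≤ |(ρ - r) / r| + |((ρ - r) ^ 2 - η ^ 2) / (4 * r ^ 2)| := abs_add_le _ _
    _ ≤ K / r + K ^ 2 / (4 * r ^ 2) := by
      rw [abs_div, abs_div, abs_of_pos hr0, abs_of_pos (show (0 : ℝ) < 4 * r ^ 2 by positivity)]
      gcongr
    _ ≤ K / r + K ^ 2 / r := by gcongr; nlinarith
    _ = (K + K ^ 2) / r := by ring

lemma exists_abs_kernel_sub_one_le (p : ℝ) {K : ℝ} (hK : 0 ≤ K) :
    ∃ C : ℝ, 0 ≤ C ∧ ∀ r ρ η : ℝ, 2 * (K + K ^ 2) + 1 ≤ r → |ρ - r| ≤ K → |η| ≤ K →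
      |ρ / r * (((ρ + r) ^ 2 - η ^ 2) / (4 * r ^ 2)) ^ p - 1| ≤ C / r := by
  obtain ⟨A, hA, hAq⟩ := exists_abs_rpow_sub_one_le p
  set c := K + K ^ 2
  have hc : 0 ≤ c := by positivity
  refine ⟨c * (1 + A) + A * c, by positivity, fun r ρ η hr hρ hη => ?_⟩
  have hr0 : 0 < r := by linarith
  -- keeps `((ρ + r)² - η²) / (4 r²)` in `[1/2, 3/2]`, where `x ↦ x ^ p` is Lipschitz
  have hcr : c / r ≤ 1 / 2 := by rw [div_le_iff₀ hr0]; linarith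
  have hX := abs_sq_sub_sq_div_sub_one_le (by linarith) hρ hη
  have hratio : |ρ / r - 1| ≤ c / r := by
    rw [div_sub_one hr0.ne', abs_div, abs_of_pos hr0]
    gcongr
    linarith [sq_nonneg K]
  calc _ ≤ c / r * (1 + A * (c / r)) + A * (c / r) :=
        abs_mul_sub_one_le hratio ((hAq _ (hX.trans hcr)).trans (by gcongr))
    _ ≤ c / r * (1 + A) + A * (c / r) := by
        gcongr; nlinarith
    _ = (c * (1 + A) + A * c) / r := by ring

lemma hasDerivAt_rpow_sq_sub_sq_div {p b η : ℝ} (hp : p + 1 ≠ 0) (hη : b ^ 2 < η ^ 2) :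
    HasDerivAt (fun x => (x ^ 2 - b ^ 2) ^ (p + 1) / (2 * (p + 1)))
      (η * (η ^ 2 - b ^ 2) ^ p) η := by
  have hsq : HasDerivAt (fun x : ℝ => x ^ 2 - b ^ 2) (2 * η) η := by
    simpa using (hasDerivAt_pow 2 η).sub_const (b ^ 2)
  refine ((hsq.rpow_const (p := p + 1) (Or.inl (sub_pos.2 hη).ne')).div_const
    (2 * (p + 1))).congr_deriv ?_
  rw [add_sub_cancel_right]
  field_simp

lemma continuousOn_rpow_sq_sub_sq_div {p b : ℝ} (hp : -1 < p) (s : Set ℝ) :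
    ContinuousOn (fun x => (x ^ 2 - b ^ 2) ^ (p + 1) / (2 * (p + 1))) s :=
  ((Real.continuous_rpow_const (by linarith)).comp (by fun_prop)).continuousOn.div_const _

lemma mul_rpow_sq_sub_sq_nonneg {p b η : ℝ} (hb : 0 ≤ b) (hη : b < η) :
    0 ≤ η * (η ^ 2 - b ^ 2) ^ p :=
  mul_nonneg (hb.trans hη.le) (Real.rpow_nonneg (by nlinarith) p)

lemma integrableOn_mul_rpow_sq_sub_sq {p b : ℝ} (K : ℝ) (hp : -1 < p) (hb : 0 ≤ b) :
    IntegrableOn (fun η => η * (η ^ 2 - b ^ 2) ^ p) (Ioo b K) :=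
  (intervalIntegral.integrableOn_deriv_of_nonneg (continuousOn_rpow_sq_sub_sq_div hp _)
    (fun η hη => hasDerivAt_rpow_sq_sub_sq_div (by linarith) (by nlinarith [hη.1]))
    (fun η hη => mul_rpow_sq_sub_sq_nonneg hb hη.1)).mono_set Ioo_subset_Ioc_self

lemma integral_mul_rpow_sq_sub_sq {p b K : ℝ} (hp : -1 < p) (hb : 0 ≤ b) (hbK : b ≤ K) :
    ∫ η in Ioo b K, η * (η ^ 2 - b ^ 2) ^ p = (K ^ 2 - b ^ 2) ^ (p + 1) / (2 * (p + 1)) := by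
  have hFTC := intervalIntegral.integral_eq_sub_of_hasDerivAt_of_le hbK
    (continuousOn_rpow_sq_sub_sq_div hp _)
    (fun η hη => hasDerivAt_rpow_sq_sub_sq_div (by linarith) (by nlinarith [hη.1]))
    ((intervalIntegrable_iff_integrableOn_Ioo_of_le hbK).2
      (integrableOn_mul_rpow_sq_sub_sq K hp hb))
  rw [intervalIntegral.integral_of_le hbK, integral_Ioc_eq_integral_Ioo] at hFTC
  rw [hFTC, sub_self, Real.zero_rpow (by linarith), zero_div, sub_zero]

lemma abs_mul_mul_rpow_sq_sub_sq_le {J : ℝ → ℝ} {M p b η : ℝ} (hM : ∀ η, |J η| ≤ M)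
    (hb : 0 ≤ b) (hη : b < η) :
    |J η * η * (η ^ 2 - b ^ 2) ^ p| ≤ M * (η * (η ^ 2 - b ^ 2) ^ p) := by
  rw [mul_assoc, abs_mul, abs_of_nonneg (mul_rpow_sq_sub_sq_nonneg hb hη)]
  exact mul_le_mul_of_nonneg_right (hM η) (mul_rpow_sq_sub_sq_nonneg hb hη)

lemma integrableOn_mul_mul_rpow_sq_sub_sq {J : ℝ → ℝ} {M p b : ℝ} (K : ℝ) (hJ : Measurable J)
    (hM : ∀ η, |J η| ≤ M) (hp : -1 < p) (hb : 0 ≤ b) :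
    IntegrableOn (fun η => J η * η * (η ^ 2 - b ^ 2) ^ p) (Ioo b K) := by
  refine ((integrableOn_mul_rpow_sq_sub_sq K hp hb).const_mul M).mono'
    (by fun_prop) ((ae_restrict_iff' measurableSet_Ioo).2 (ae_of_all _ fun η hη =>
      abs_mul_mul_rpow_sq_sub_sq_le hM hb hη.1))

lemma integral_abs_mul_mul_rpow_sq_sub_sq_le {J : ℝ → ℝ} {M p b K : ℝ} (hM : ∀ η, |J η| ≤ M)
    (hp : -1 < p) (hb : 0 ≤ b) (hbK : b ≤ K) :
    ∫ η in Ioo b K, |J η * η * (η ^ 2 - b ^ 2) ^ p| ≤ M * ((K ^ 2) ^ (p + 1) / (2 * (p + 1))) := by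
  have hM0 : 0 ≤ M := (abs_nonneg _).trans (hM 0)
  calc ∫ η in Ioo b K, |J η * η * (η ^ 2 - b ^ 2) ^ p|
      ≤ ∫ η in Ioo b K, M * (η * (η ^ 2 - b ^ 2) ^ p) := by
        refine integral_mono_of_nonneg (ae_of_all _ fun η => abs_nonneg _)
          ((integrableOn_mul_rpow_sq_sub_sq K hp hb).const_mul M)
          ((ae_restrict_iff' measurableSet_Ioo).2 (ae_of_all _ fun η hη =>
            abs_mul_mul_rpow_sq_sub_sq_le hM hb hη.1))
    _ = M * ((K ^ 2 - b ^ 2) ^ (p + 1) / (2 * (p + 1))) := by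
        rw [integral_const_mul, integral_mul_rpow_sq_sub_sq hp hb hbK]
    _ ≤ M * ((K ^ 2) ^ (p + 1) / (2 * (p + 1))) := by
        gcongr <;> nlinarith

lemma abs_setIntegral_mul_sub_setIntegral_le {J g : ℝ → ℝ} {M p b K ε : ℝ}
    (hJ : Measurable J) (hM : ∀ η, |J η| ≤ M) (hp : -1 < p) (hb : 0 ≤ b) (hbK : b ≤ K)
    (hg : Measurable g) (hε : 0 ≤ ε) (hgK : ∀ η ∈ Ioo b K, |g η - 1| ≤ ε) :
    |(∫ η in Ioo b K, g η * (J η * η * (η ^ 2 - b ^ 2) ^ p))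
        - ∫ η in Ioo b K, J η * η * (η ^ 2 - b ^ 2) ^ p|
      ≤ ε * (M * ((K ^ 2) ^ (p + 1) / (2 * (p + 1)))) := by
  calc _ ≤ ε * ∫ η in Ioo b K, |J η * η * (η ^ 2 - b ^ 2) ^ p| :=
        abs_integral_mul_sub_integral_le hg.aestronglyMeasurable
          (integrableOn_mul_mul_rpow_sq_sub_sq K hJ hM hp hb)
          ((ae_restrict_iff' measurableSet_Ioo).2 (ae_of_all _ hgK))
    _ ≤ ε * (M * ((K ^ 2) ^ (p + 1) / (2 * (p + 1)))) := by
        gcongr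
        exact integral_abs_mul_mul_rpow_sq_sub_sq_le hM hp hb hbK

lemma setIntegral_Ioi_abs_sub_eq {J : ℝ → ℝ} {p K r ρ : ℝ} (hsupp : ∀ η, K < η → J η = 0) :
    ∫ η in Ioi |r - ρ|, J η * η * (η ^ 2 - (r - ρ) ^ 2) ^ p
      = ∫ η in Ioo |ρ - r| K, J η * η * (η ^ 2 - |ρ - r| ^ 2) ^ p := by
  rw [abs_sub_comm, ← sq_abs (r - ρ), abs_sub_comm,
    setIntegral_eq_setIntegral_Ioo_of_eq_zero measurableSet_Ioi Ioc_subset_Ioi_self subset_rfl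
      fun η hη => by simp [hsupp η hη]]

lemma two_rpow_mul_div_pow_mul_rpow {N : ℕ} (hN : 2 ≤ N) (ρ : ℝ) {r X : ℝ} (hr : 0 < r)
    (hX : 0 ≤ X) :
    (2 : ℝ) ^ ((3 : ℝ) - N) * (ρ / r ^ (N - 2)) * X ^ (((N : ℝ) - 3) / 2)
      = ρ / r * (X / (4 * r ^ 2)) ^ (((N : ℝ) - 3) / 2) := by
  have hfour : ((4 : ℝ) * r ^ 2) ^ (((N : ℝ) - 3) / 2) = 2 ^ ((N : ℝ) - 3) * r ^ ((N : ℝ) - 3) := by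
    rw [show (4 : ℝ) * r ^ 2 = (2 * r) ^ (2 : ℝ) by norm_num; ring, ← Real.rpow_mul (by positivity),
      Real.mul_rpow (by norm_num) hr.le]
    ring_nf
  have hpow : r ^ (N - 2) = r ^ ((N : ℝ) - 3) * r := by
    rw [← Real.rpow_natCast, ← Real.rpow_add_one hr.ne', Nat.cast_sub hN]
    ring_nf
  have htwo : (2 : ℝ) ^ ((3 : ℝ) - N) * 2 ^ ((N : ℝ) - 3) = 1 := by
    rw [← Real.rpow_add two_pos]; norm_num
  rw [Real.div_rpow hX (by positivity), hfour, hpow]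
  field_simp
  linear_combination ρ * X ^ (((N : ℝ) - 3) / 2) * htwo

lemma setIntegral_Ioo_kernel_eq {N : ℕ} (hN : 2 ≤ N) {J : ℝ → ℝ} {K r ρ : ℝ}
    (hsupp : ∀ η, K < η → J η = 0) (hr : 0 < r) (hK : K < ρ + r) :
    (2 : ℝ) ^ ((3 : ℝ) - N) * (ρ / r ^ (N - 2)) *
        ∫ η in Ioo |ρ - r| (ρ + r),
          (((ρ + r) ^ 2 - η ^ 2) * (η ^ 2 - (ρ - r) ^ 2)) ^ (((N : ℝ) - 3) / 2) * (η * J η)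
      = ∫ η in Ioo |ρ - r| K, ρ / r * (((ρ + r) ^ 2 - η ^ 2) / (4 * r ^ 2)) ^ (((N : ℝ) - 3) / 2) *
          (J η * η * (η ^ 2 - |ρ - r| ^ 2) ^ (((N : ℝ) - 3) / 2)) := by
  rw [setIntegral_eq_setIntegral_Ioo_of_eq_zero (K := K) measurableSet_Ioo
      (Ioc_subset_Ioo_right hK) Ioo_subset_Ioi_self
      fun η hη => by simp [hsupp η hη],
    ← integral_const_mul]
  refine setIntegral_congr_fun measurableSet_Ioo fun η hη => ?_
  have hη0 : 0 ≤ η := (abs_nonneg _).trans hη.1.le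
  have houter : 0 ≤ (ρ + r) ^ 2 - η ^ 2 := by nlinarith [hη.2]
  have hinner : 0 ≤ η ^ 2 - |ρ - r| ^ 2 := by nlinarith [hη.1, abs_nonneg (ρ - r)]
  rw [← sq_abs (ρ - r), Real.mul_rpow houter hinner,
    ← two_rpow_mul_div_pow_mul_rpow hN ρ hr houter]
  ring

theorem stmt5_general (N : ℕ) (hN : 2 ≤ N) (J : ℝ → ℝ)
    (hJc : Continuous J) (hJb : ∃ M, ∀ η, |J η| ≤ M)
    (Kstar : ℝ) (hK : 0 < Kstar) (hsupp : ∀ η, Kstar < η → J η = 0)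
    (Jt : ℝ → ℝ → ℝ) (Jstar : ℝ → ℝ)
    (hJt : ∀ r ρ : ℝ, 0 < r → 0 < ρ → Jt r ρ =
      unitSphereArea (N - 1) * (2:ℝ) ^ ((3:ℝ) - (N:ℝ)) * (ρ / r ^ (N - 2)) *
        ∫ η in Set.Ioo |ρ - r| (ρ + r),
          (((ρ + r) ^ 2 - η ^ 2) * (η ^ 2 - (ρ - r) ^ 2)) ^ (((N:ℝ) - 3) / 2) * (η * J η))
    (hJs : ∀ l : ℝ, Jstar l =
      unitSphereArea (N - 1) *
        ∫ η in Set.Ioi |l|, J η * η * (η ^ 2 - l ^ 2) ^ (((N:ℝ) - 3) / 2)) :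
    ∃ L₀ > (0:ℝ), ∃ C > (0:ℝ), ∀ r : ℝ, L₀ ≤ r →
      ∀ ρ ∈ Set.Icc (r - Kstar) (r + Kstar), |Jt r ρ - Jstar (r - ρ)| ≤ C / r := by
  obtain ⟨M, hM⟩ := hJb
  set p : ℝ := ((N : ℝ) - 3) / 2 with hp_def
  have hp : -1 < p := by rw [hp_def]; linarith [show (2 : ℝ) ≤ N by exact_mod_cast hN]
  obtain ⟨C₁, hC₁, hkernel⟩ := exists_abs_kernel_sub_one_le p hK.le
  set ω := unitSphereArea (N - 1)
  have hω : 0 ≤ ω := mul_nonneg (Nat.cast_nonneg _) ENNReal.toReal_nonneg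
  have hM0 : 0 ≤ M := (abs_nonneg _).trans (hM 0)
  have hW : 0 ≤ (Kstar ^ 2) ^ (p + 1) / (2 * (p + 1)) := div_nonneg (by positivity) (by linarith)
  set C := ω * (C₁ * (M * ((Kstar ^ 2) ^ (p + 1) / (2 * (p + 1)))))
  refine ⟨2 * (Kstar + Kstar ^ 2) + 1, by positivity, C + 1, by positivity, fun r hr ρ hρ => ?_⟩
  have hr0 : 0 < r := by nlinarith
  have hρr : |ρ - r| ≤ Kstar := abs_le.2 ⟨by linarith [hρ.1], by linarith [hρ.2]⟩
  have hJs' : Jstar (r - ρ) =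
      ω * ∫ η in Ioo |ρ - r| Kstar, J η * η * (η ^ 2 - |ρ - r| ^ 2) ^ p := by
    rw [hJs, setIntegral_Ioi_abs_sub_eq hsupp]
  have hJt' : Jt r ρ = ω * ∫ η in Ioo |ρ - r| Kstar,
      ρ / r * (((ρ + r) ^ 2 - η ^ 2) / (4 * r ^ 2)) ^ p *
        (J η * η * (η ^ 2 - |ρ - r| ^ 2) ^ p) := by
    rw [hJt r ρ hr0 (by nlinarith [hρ.1]),
      ← setIntegral_Ioo_kernel_eq hN hsupp hr0 (by nlinarith [hρ.1])]
    ring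
  have hdiff := abs_setIntegral_mul_sub_setIntegral_le hJc.measurable hM hp (abs_nonneg _) hρr
    (by fun_prop) (by positivity) fun η hη =>
      hkernel r ρ η hr hρr (abs_le.2 ⟨by linarith [hη.1, abs_nonneg (ρ - r)], hη.2.le⟩)
  calc |Jt r ρ - Jstar (r - ρ)|
      ≤ ω * (C₁ / r * (M * ((Kstar ^ 2) ^ (p + 1) / (2 * (p + 1))))) := by
        rw [hJt', hJs', ← mul_sub, abs_mul, abs_of_nonneg hω]
        exact mul_le_mul_of_nonneg_left hdiff hω
    _ = C / r := by ring
    _ ≤ (C + 1) / r := by gcongr; linarith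

/-- If `J` is continuous, bounded, nonnegative and supported in `[0, K_*]`, then there exist
`L₀ > 0` and `C > 0` such that `|J̃(r,ρ) - J_*(r-ρ)| ≤ C/r` for `r ≥ L₀` and
`ρ ∈ [r - K_*, r + K_*]`. -/
theorem stmt5 (N : ℕ) (hN : 2 ≤ N) (J : ℝ → ℝ)
    (hJc : Continuous J) (hJb : ∃ M, ∀ η, |J η| ≤ M) (hJnn : ∀ η, 0 ≤ J η)
    (Kstar : ℝ) (hK : 0 < Kstar) (hsupp : ∀ η, Kstar < η → J η = 0)
    (Jt : ℝ → ℝ → ℝ) (Jstar : ℝ → ℝ)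
    (hJt : ∀ r ρ : ℝ, 0 < r → 0 < ρ → Jt r ρ =
      unitSphereArea (N - 1) * (2:ℝ) ^ ((3:ℝ) - (N:ℝ)) * (ρ / r ^ (N - 2)) *
        ∫ η in Set.Ioo |ρ - r| (ρ + r),
          (((ρ + r) ^ 2 - η ^ 2) * (η ^ 2 - (ρ - r) ^ 2)) ^ (((N:ℝ) - 3) / 2) * (η * J η))
    (hJs : ∀ l : ℝ, Jstar l =
      unitSphereArea (N - 1) *
        ∫ η in Set.Ioi |l|, J η * η * (η ^ 2 - l ^ 2) ^ (((N:ℝ) - 3) / 2)) :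
    ∃ L₀ > (0:ℝ), ∃ C > (0:ℝ), ∀ r : ℝ, L₀ ≤ r →
      ∀ ρ ∈ Set.Icc (r - Kstar) (r + Kstar), |Jt r ρ - Jstar (r - ρ)| ≤ C / r :=
  stmt5_general N hN J hJc hJb Kstar hK hsupp Jt Jstar hJt hJs
end

section
/- Let φ : (-∞, 0] → ℝ be continuous, strictly decreasing, and bounded, and let J_* : ℝ → ℝ₊ be continuous, even, with support contained in [-K_*, K_*] and J_* > 0 on an open subinterval of (0, K_*). Then B := ∫_{-K_*}^0 ∫_0^{K_*} (r + ρ) φ(r) J_*(r - ρ) dρ dr < 0. -/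
/-!
Reflecting `r ↦ -r` and using that `J_*` is even turns `B` into
`∫∫_{[0,K]²} (ρ - r) ψ(r) J_*(r + ρ)` with `ψ r = φ (-r)` strictly increasing. Averaging this
with its image under the swap `(r, ρ) ↦ (ρ, r)` gives `2B = -∫∫ (r - ρ) (ψ r - ψ ρ) J_*(r + ρ)`,
whose integrand is nonnegative and, by continuity, positive near any off-diagonal interior point
`(r, ρ)` with `J_*(r + ρ) > 0`.
-/

open MeasureTheory intervalIntegral Set

section SubMulSub

variable {α : Type*} [Ring α] [LinearOrder α] [IsStrictOrderedRing α] {f : α → α} {s : Set α}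
  {a b : α}

theorem MonotoneOn.sub_mul_sub_nonneg (hf : MonotoneOn f s) (ha : a ∈ s) (hb : b ∈ s) :
    0 ≤ (a - b) * (f a - f b) := by
  rcases le_total a b with hab | hab
  · exact mul_nonneg_of_nonpos_of_nonpos (sub_nonpos.2 hab) (sub_nonpos.2 (hf ha hb hab))
  · exact mul_nonneg (sub_nonneg.2 hab) (sub_nonneg.2 (hf hb ha hab))

theorem StrictMonoOn.sub_mul_sub_pos (hf : StrictMonoOn f s) (ha : a ∈ s) (hb : b ∈ s)
    (hab : a ≠ b) : 0 < (a - b) * (f a - f b) := by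
  rcases hab.lt_or_gt with hab | hab
  · exact mul_pos_of_neg_of_neg (sub_neg.2 hab) (sub_neg.2 (hf ha hb hab))
  · exact mul_pos (sub_pos.2 hab) (sub_pos.2 (hf hb ha hab))

end SubMulSub

theorem setIntegral_pos_of_continuousOn_of_nonneg {X : Type*} [TopologicalSpace X]
    [MeasurableSpace X] {μ : Measure X} [μ.IsOpenPosMeasure] {f : X → ℝ} {s : Set X}
    (hs : MeasurableSet s) (hfi : IntegrableOn f s μ) (hfc : ContinuousOn f s)
    (hf : ∀ x ∈ s, 0 ≤ f x) {x : X} (hx : x ∈ interior s) (hfx : 0 < f x) :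
    0 < ∫ y in s, f y ∂μ := by
  rw [setIntegral_pos_iff_support_of_nonneg_ae ((ae_restrict_iff' hs).2 (.of_forall hf)) hfi]
  have hU : IsOpen (interior s ∩ f ⁻¹' Ioi 0) :=
    (hfc.mono interior_subset).isOpen_inter_preimage isOpen_interior isOpen_Ioi
  refine (hU.measure_pos μ ⟨x, hx, hfx⟩).trans_le (measure_mono ?_)
  exact fun y ⟨hys, hfy⟩ => ⟨(mem_Ioi.1 hfy).ne', interior_subset hys⟩

theorem two_mul_setIntegral_prod_self {α : Type*} [MeasurableSpace α] {μ : Measure α} [SFinite μ]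
    {s : Set α} {f : α × α → ℝ} (hf : IntegrableOn f (s ×ˢ s) (μ.prod μ)) :
    2 * ∫ p in s ×ˢ s, f p ∂μ.prod μ = ∫ p in s ×ˢ s, (f p + f p.swap) ∂μ.prod μ := by
  have hf' : IntegrableOn (fun p => f p.swap) (s ×ˢ s) (μ.prod μ) := by
    rw [IntegrableOn, ← Measure.prod_restrict] at hf ⊢
    exact hf.swap
  rw [integral_add hf hf', setIntegral_prod_swap, two_mul]

theorem integral_integral_sub_mul_neg {K x : ℝ} {ψ J : ℝ → ℝ} (hψc : ContinuousOn ψ (Icc 0 K))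
    (hψ : StrictMonoOn ψ (Icc 0 K)) (hJc : Continuous J) (hJnn : ∀ y, 0 ≤ J y)
    (hx : x ∈ Ioo 0 K) (hJx : 0 < J x) :
    (∫ r in 0..K, ∫ ρ in 0..K, (ρ - r) * ψ r * J (r + ρ)) < 0 := by
  obtain ⟨hx0, hxK⟩ := hx
  set S : Set (ℝ × ℝ) := Ioc 0 K ×ˢ Ioc 0 K
  set g : ℝ × ℝ → ℝ := fun p => (p.2 - p.1) * ψ p.1 * J (p.1 + p.2)
  set F : ℝ × ℝ → ℝ := fun p => (p.1 - p.2) * (ψ p.1 - ψ p.2) * J (p.1 + p.2)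
  have hSsub : S ⊆ Icc 0 K ×ˢ Icc 0 K := prod_mono Ioc_subset_Icc_self Ioc_subset_Icc_self
  have hψ₁ : ContinuousOn (fun p : ℝ × ℝ => ψ p.1) (Icc 0 K ×ˢ Icc 0 K) :=
    hψc.comp continuousOn_fst fun _ hp => hp.1
  have hψ₂ : ContinuousOn (fun p : ℝ × ℝ => ψ p.2) (Icc 0 K ×ˢ Icc 0 K) :=
    hψc.comp continuousOn_snd fun _ hp => hp.2
  have hJ₁₂ : Continuous fun p : ℝ × ℝ => J (p.1 + p.2) := by fun_prop
  have hgc : ContinuousOn g (Icc 0 K ×ˢ Icc 0 K) :=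
    ((continuousOn_snd.sub continuousOn_fst).mul hψ₁).mul hJ₁₂.continuousOn
  have hFc : ContinuousOn F (Icc 0 K ×ˢ Icc 0 K) :=
    ((continuousOn_fst.sub continuousOn_snd).mul (hψ₁.sub hψ₂)).mul hJ₁₂.continuousOn
  have hgi : IntegrableOn g S :=
    (hgc.integrableOn_compact (isCompact_Icc.prod isCompact_Icc)).mono_set hSsub
  have hFi : IntegrableOn F S :=
    (hFc.integrableOn_compact (isCompact_Icc.prod isCompact_Icc)).mono_set hSsub
  have hFnn : ∀ p ∈ S, 0 ≤ F p := fun p hp =>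
    mul_nonneg (hψ.monotoneOn.sub_mul_sub_nonneg (hSsub hp).1 (hSsub hp).2) (hJnn _)
  have hFpos : 0 < ∫ p in S, F p := by
    refine setIntegral_pos_of_continuousOn_of_nonneg (measurableSet_Ioc.prod measurableSet_Ioc)
      hFi (hFc.mono hSsub) hFnn (x := (3 * x / 4, x / 4)) ?_ ?_
    · rw [interior_prod_eq, interior_Ioc]
      constructor <;> constructor <;> linarith
    · refine mul_pos (hψ.sub_mul_sub_pos ?_ ?_ ?_) ?_
      · constructor <;> linarith
      · constructor <;> linarith
      · dsimp only; linarith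
      · change 0 < J (3 * x / 4 + x / 4)
        rwa [show 3 * x / 4 + x / 4 = x by ring]
  have hsymm : ∀ p, g p + g p.swap = -F p := fun p => by
    simp only [g, F, Prod.fst_swap, Prod.snd_swap, add_comm p.2 p.1]; ring
  calc (∫ r in 0..K, ∫ ρ in 0..K, (ρ - r) * ψ r * J (r + ρ))
      = ∫ p in S, g p := by
        simp only [integral_of_le (hx0.trans hxK).le]
        exact (setIntegral_prod g hgi).symm
    _ = -(∫ p in S, F p) / 2 := by
        rw [← MeasureTheory.integral_neg, eq_div_iff two_ne_zero, mul_comm]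
        simp only [← hsymm]
        exact two_mul_setIntegral_prod_self hgi
    _ < 0 := by linarith

theorem stmt11_general (Kstar : ℝ)
    (φ : ℝ → ℝ) (hφc : ContinuousOn φ (Set.Iic 0)) (hφanti : StrictAntiOn φ (Set.Iic 0))
    (Jstar : ℝ → ℝ) (hJc : Continuous Jstar) (hJnn : ∀ x, 0 ≤ Jstar x)
    (hJeven : ∀ x, Jstar (-x) = Jstar x)
    (hpos : ∃ a b : ℝ, 0 < a ∧ a < b ∧ b < Kstar ∧ ∀ x ∈ Set.Ioo a b, 0 < Jstar x) :
    (∫ r in (-Kstar)..0, ∫ ρ in (0:ℝ)..Kstar, (r + ρ) * φ r * Jstar (r - ρ)) < 0 := by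
  obtain ⟨a, b, ha, hab, hbK, hJab⟩ := hpos
  have hneg : MapsTo (fun r : ℝ => -r) (Icc 0 Kstar) (Iic 0) := fun r hr => neg_nonpos.2 hr.1
  have hψ : StrictMonoOn (fun r => φ (-r)) (Icc 0 Kstar) :=
    hφanti.comp (fun _ _ _ _ h => neg_lt_neg h) hneg
  have hψc : ContinuousOn (fun r => φ (-r)) (Icc 0 Kstar) :=
    hφc.comp continuous_neg.continuousOn hneg
  have hreflect := integral_comp_neg (a := 0) (b := Kstar)
    fun r => ∫ ρ in (0:ℝ)..Kstar, (r + ρ) * φ r * Jstar (r - ρ)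
  rw [neg_zero] at hreflect
  calc (∫ r in (-Kstar)..0, ∫ ρ in (0:ℝ)..Kstar, (r + ρ) * φ r * Jstar (r - ρ))
      = ∫ r in (0:ℝ)..Kstar, ∫ ρ in (0:ℝ)..Kstar, (ρ - r) * φ (-r) * Jstar (r + ρ) := by
        rw [← hreflect]
        refine integral_congr fun r _ => integral_congr fun ρ _ => ?_
        simp only [← hJeven (r + ρ), neg_add', sub_eq_neg_add]
    _ < 0 := integral_integral_sub_mul_neg hψc hψ hJc hJnn
        (x := (a + b) / 2) ⟨by linarith, by linarith⟩ (hJab _ ⟨by linarith, by linarith⟩)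

/-- Let `φ : (-∞,0] → ℝ` be continuous, strictly decreasing and bounded, and `J_* : ℝ → ℝ₊`
continuous, even, supported in `[-K_*, K_*]` and positive on some open subinterval of
`(0, K_*)`. Then `B = ∫_{-K_*}^0 ∫_0^{K_*} (r+ρ) φ(r) J_*(r-ρ) dρ dr < 0`. -/
theorem stmt11 (Kstar : ℝ) (hK : 0 < Kstar)
    (φ : ℝ → ℝ) (hφc : ContinuousOn φ (Set.Iic 0)) (hφanti : StrictAntiOn φ (Set.Iic 0))
    (hφb : ∃ M, ∀ x ≤ (0:ℝ), |φ x| ≤ M)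
    (Jstar : ℝ → ℝ) (hJc : Continuous Jstar) (hJnn : ∀ x, 0 ≤ Jstar x)
    (hJeven : ∀ x, Jstar (-x) = Jstar x)
    (hJsupp : ∀ x, Kstar < |x| → Jstar x = 0)
    (hpos : ∃ a b : ℝ, 0 < a ∧ a < b ∧ b < Kstar ∧ ∀ x ∈ Set.Ioo a b, 0 < Jstar x) :
    (∫ r in (-Kstar)..0, ∫ ρ in (0:ℝ)..Kstar, (r + ρ) * φ r * Jstar (r - ρ)) < 0 :=
  stmt11_general Kstar φ hφc hφanti Jstar hJc hJnn hJeven hpos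
end

section
/- Suppose J : ℝ₊ → ℝ₊ is measurable and there exist constants C₁, C₂ > 0 and R₀ ≥ 1 with C₁ r^{-β} ≤ J(r) ≤ C₂ r^{-β} for all r ≥ R₀, where N < β ≤ N + 1. Then J_*(ρ) ≍ ρ^{N-β-1} for ρ large; i.e., there exist c₁, c₂ > 0 and ρ₀ such that c₁ ρ^{N-β-1} ≤ J_*(ρ) ≤ c₂ ρ^{N-β-1} for all ρ ≥ ρ₀. -/
open MeasureTheory

/-!
Once `ρ ≥ R₀`, the bounds on `J` make the integrand of `J_*(ρ)` comparable, with constants `C₁`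
and `C₂`, to `(r² - ρ²)^α r^{1-β}` where `α = (N - 3)/2`. The substitution `r = ρξ` turns the
integral of the latter into `ρ^{N-β-1} ∫_1^∞ (ξ² - 1)^α ξ^{1-β} dξ`. This integral is finite
and positive: near `ξ = 1` the singularity `(ξ - 1)^α` is integrable because `α > -1`, and at
infinity the integrand is equivalent to `ξ^{N-2-β}`, integrable because `β > N - 1`.
-/

open Set Real Filter Asymptotics

lemma unitSphereArea_pos {k : ℕ} (hk : 0 < k) : 0 < unitSphereArea k :=
  mul_pos (Nat.cast_pos.mpr hk)
    (ENNReal.toReal_pos (Metric.measure_ball_pos volume _ one_pos).ne' measure_ball_lt_top.ne)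

lemma integral_mul_le_and_le_mul {X : Type*} [MeasurableSpace X] {μ : Measure X} {f g : X → ℝ}
    {c₁ c₂ : ℝ} (hf : AEStronglyMeasurable f μ) (hg : Integrable g μ)
    (h₁ : ∀ᵐ x ∂μ, c₁ * g x ≤ f x) (h₂ : ∀ᵐ x ∂μ, f x ≤ c₂ * g x) :
    c₁ * ∫ x, g x ∂μ ≤ ∫ x, f x ∂μ ∧ ∫ x, f x ∂μ ≤ c₂ * ∫ x, g x ∂μ := by
  have hfi := integrable_of_le_of_le hf h₁ h₂ (hg.const_mul c₁) (hg.const_mul c₂)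
  rw [← integral_const_mul, ← integral_const_mul]
  exact ⟨integral_mono_ae (hg.const_mul c₁) hfi h₁, integral_mono_ae hfi (hg.const_mul c₂) h₂⟩

section
variable {α γ : ℝ}

lemma integrableOn_Ioc_one_two_sq_sub_one_rpow_mul_rpow (hα : -1 < α) :
    IntegrableOn (fun ξ : ℝ => (ξ ^ 2 - 1) ^ α * ξ ^ γ) (Ioc 1 2) := by
  have hsing : IntegrableOn (fun ξ : ℝ => (ξ - 1) ^ α) (Icc 1 2) := by
    rw [integrableOn_Icc_iff_integrableOn_Ioc,
      ← intervalIntegrable_iff_integrableOn_Ioc_of_le one_le_two]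
    simpa [one_add_one_eq_two] using
      (intervalIntegral.intervalIntegrable_rpow' (a := 0) (b := 1) hα).comp_sub_right 1
  have hcont : ContinuousOn (fun ξ : ℝ => (ξ + 1) ^ α * ξ ^ γ) (Icc 1 2) := by
    refine ContinuousOn.mul ?_ ?_ <;>
      refine ContinuousOn.rpow_const (by fun_prop) fun ξ hξ => ?_ <;>
      exact Or.inl (by linarith [hξ.1])
  refine ((hsing.mul_continuousOn hcont isCompact_Icc).mono_set Ioc_subset_Icc_self).congr_fun
    (fun ξ hξ => ?_) measurableSet_Ioc
  have h1 : (1 : ℝ) < ξ := hξ.1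
  rw [show ξ ^ 2 - 1 = (ξ - 1) * (ξ + 1) by ring, mul_rpow (by linarith) (by linarith), mul_assoc]

lemma sq_sub_one_rpow_mul_rpow_isBigO_atTop :
    (fun ξ : ℝ => (ξ ^ 2 - 1) ^ α * ξ ^ γ) =O[atTop] fun ξ => ξ ^ (2 * α + γ) := by
  have hsq : (fun ξ : ℝ => ξ ^ 2 - 1) ~[atTop] fun ξ => ξ ^ 2 := by
    have hc : (fun _ : ℝ => (-1 : ℝ)) =o[atTop] fun ξ : ℝ => ξ ^ 2 :=
      isLittleO_const_left.2 <| .inr <|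
        tendsto_norm_atTop_atTop.comp (tendsto_pow_atTop two_ne_zero)
    refine (IsEquivalent.refl.add_isLittleO hc).congr_left (.of_forall fun ξ => ?_)
    simp [sub_eq_add_neg]
  refine ((hsq.rpow (fun ξ => sq_nonneg ξ) (r := α)).mul
    (IsEquivalent.refl (u := fun ξ : ℝ => ξ ^ γ))).isBigO.congr' EventuallyEq.rfl ?_
  filter_upwards [eventually_gt_atTop 0] with ξ hξ
  simp only [Pi.mul_apply, Pi.pow_apply]
  rw [rpow_add hξ, rpow_mul hξ.le, rpow_two]

lemma integrableOn_Ioi_one_sq_sub_one_rpow_mul_rpow (hα : -1 < α) (hαγ : 2 * α + γ < -1) :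
    IntegrableOn (fun ξ : ℝ => (ξ ^ 2 - 1) ^ α * ξ ^ γ) (Ioi 1) := by
  rw [← Ioc_union_Ici_eq_Ioi one_lt_two]
  refine (integrableOn_Ioc_one_two_sq_sub_one_rpow_mul_rpow hα).union ?_
  have hcont : ContinuousOn (fun ξ : ℝ => (ξ ^ 2 - 1) ^ α * ξ ^ γ) (Ici 2) := by
    refine ContinuousOn.mul ?_ ?_ <;>
      refine ContinuousOn.rpow_const (by fun_prop) fun ξ hξ => ?_ <;>
      exact Or.inl (by nlinarith [mem_Ici.mp hξ])
  exact (hcont.locallyIntegrableOn measurableSet_Ici).integrableOn_of_isBigO_atTop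
    sq_sub_one_rpow_mul_rpow_isBigO_atTop (integrableAtFilter_rpow_atTop_iff.mpr hαγ)

lemma integral_Ioi_one_sq_sub_one_rpow_mul_rpow_pos (hα : -1 < α) (hαγ : 2 * α + γ < -1) :
    0 < ∫ ξ in Ioi (1 : ℝ), (ξ ^ 2 - 1) ^ α * ξ ^ γ := by
  have hpos : ∀ ξ ∈ Ioi (1 : ℝ), 0 < (ξ ^ 2 - 1) ^ α * ξ ^ γ := fun ξ (hξ : 1 < ξ) =>
    mul_pos (rpow_pos_of_pos (by nlinarith) _) (rpow_pos_of_pos (by linarith) _)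
  rw [setIntegral_pos_iff_support_of_nonneg_ae
    ((ae_restrict_iff' measurableSet_Ioi).mpr (.of_forall fun ξ hξ => (hpos ξ hξ).le))
    (integrableOn_Ioi_one_sq_sub_one_rpow_mul_rpow hα hαγ)]
  refine lt_of_lt_of_le ?_ (measure_mono fun ξ hξ => ⟨(hpos ξ hξ).ne', hξ⟩)
  simp

lemma mul_sq_sub_sq_rpow_mul_rpow {ρ ξ : ℝ} (hρ : 0 < ρ) (hξ : 1 ≤ ξ) :
    ((ρ * ξ) ^ 2 - ρ ^ 2) ^ α * (ρ * ξ) ^ γ = ρ ^ (2 * α + γ) * ((ξ ^ 2 - 1) ^ α * ξ ^ γ) := by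
  rw [show (ρ * ξ) ^ 2 - ρ ^ 2 = ρ ^ 2 * (ξ ^ 2 - 1) by ring,
    mul_rpow (by positivity) (by nlinarith),
    mul_rpow hρ.le (by linarith), ← rpow_two, ← rpow_mul hρ.le, rpow_add hρ]
  ring

lemma integrableOn_Ioi_sq_sub_sq_rpow_mul_rpow (hα : -1 < α) (hαγ : 2 * α + γ < -1) {ρ : ℝ}
    (hρ : 0 < ρ) : IntegrableOn (fun r : ℝ => (r ^ 2 - ρ ^ 2) ^ α * r ^ γ) (Ioi ρ) := by
  rw [← mul_one ρ, ← integrableOn_Ioi_comp_mul_left_iff _ _ hρ, mul_one]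
  refine IntegrableOn.congr_fun
    ((integrableOn_Ioi_one_sq_sub_one_rpow_mul_rpow hα hαγ).const_mul (ρ ^ (2 * α + γ)))
    (fun ξ (hξ : 1 < ξ) => (mul_sq_sub_sq_rpow_mul_rpow hρ hξ.le).symm) measurableSet_Ioi

lemma integral_Ioi_sq_sub_sq_rpow_mul_rpow {ρ : ℝ} (hρ : 0 < ρ) :
    ∫ r in Ioi ρ, (r ^ 2 - ρ ^ 2) ^ α * r ^ γ =
      ρ ^ (2 * α + γ + 1) * ∫ ξ in Ioi (1 : ℝ), (ξ ^ 2 - 1) ^ α * ξ ^ γ := by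
  rw [← mul_one ρ, ← integral_comp_mul_left_Ioi' _ _ hρ, mul_one,
    setIntegral_congr_fun measurableSet_Ioi fun ξ (hξ : 1 < ξ) =>
      mul_sq_sub_sq_rpow_mul_rpow hρ hξ.le,
    integral_const_mul, smul_eq_mul, rpow_add_one hρ.ne', mul_comm _ ρ, mul_assoc]

lemma integral_Ioi_sq_sub_sq_rpow_mul_mul_bounds {J : ℝ → ℝ} (hJm : Measurable J)
    {β C₁ C₂ ρ : ℝ} (hα : -1 < α) (hαβ : 2 * α + (1 - β) < -1) (hρ : 0 < ρ)
    (hJ : ∀ r, ρ < r → C₁ * r ^ (-β) ≤ J r ∧ J r ≤ C₂ * r ^ (-β)) :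
    C₁ * (ρ ^ (2 * α + 2 - β) * ∫ ξ in Ioi (1 : ℝ), (ξ ^ 2 - 1) ^ α * ξ ^ (1 - β)) ≤
        ∫ r in Ioi ρ, (r ^ 2 - ρ ^ 2) ^ α * r * J r ∧
      ∫ r in Ioi ρ, (r ^ 2 - ρ ^ 2) ^ α * r * J r ≤
        C₂ * (ρ ^ (2 * α + 2 - β) * ∫ ξ in Ioi (1 : ℝ), (ξ ^ 2 - 1) ^ α * ξ ^ (1 - β)) := by
  have hbd : ∀ r ∈ Ioi ρ,
      C₁ * ((r ^ 2 - ρ ^ 2) ^ α * r ^ (1 - β)) ≤ (r ^ 2 - ρ ^ 2) ^ α * r * J r ∧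
        (r ^ 2 - ρ ^ 2) ^ α * r * J r ≤ C₂ * ((r ^ 2 - ρ ^ 2) ^ α * r ^ (1 - β)) := by
    intro r (hr : ρ < r)
    have hr0 : 0 < r := hρ.trans hr
    have hw : 0 ≤ (r ^ 2 - ρ ^ 2) ^ α * r := mul_nonneg (rpow_nonneg (by nlinarith) _) hr0.le
    have hsplit : r ^ (1 - β) = r * r ^ (-β) := by rw [sub_eq_add_neg, rpow_add hr0, rpow_one]
    obtain ⟨hlow, hup⟩ := hJ r hr
    rw [hsplit]
    constructor <;> linarith [mul_le_mul_of_nonneg_left hlow hw, mul_le_mul_of_nonneg_left hup hw]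
  rw [show 2 * α + 2 - β = 2 * α + (1 - β) + 1 by ring, ← integral_Ioi_sq_sub_sq_rpow_mul_rpow hρ]
  exact integral_mul_le_and_le_mul (by fun_prop)
    (integrableOn_Ioi_sq_sub_sq_rpow_mul_rpow hα hαβ hρ)
    ((ae_restrict_iff' measurableSet_Ioi).mpr (.of_forall fun r hr => (hbd r hr).1))
    ((ae_restrict_iff' measurableSet_Ioi).mpr (.of_forall fun r hr => (hbd r hr).2))

end

theorem stmt13_general (N : ℕ) (hN : 2 ≤ N) (J : ℝ → ℝ) (hJm : Measurable J)
    (C₁ C₂ R₀ β : ℝ) (hC₁ : 0 < C₁) (hC₂ : 0 < C₂)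
    (hβl : (N:ℝ) < β)
    (hbb : ∀ r : ℝ, R₀ ≤ r → C₁ * r ^ (-β) ≤ J r ∧ J r ≤ C₂ * r ^ (-β))
    (Jstar : ℝ → ℝ)
    (hJs : ∀ ρ : ℝ, 0 < ρ → Jstar ρ =
      unitSphereArea (N - 1) *
        ∫ r in Set.Ioi ρ, (r ^ 2 - ρ ^ 2) ^ (((N:ℝ) - 3) / 2) * r * J r) :
    ∃ c₁ > (0:ℝ), ∃ c₂ > (0:ℝ), ∃ ρ₀ > (0:ℝ), ∀ ρ : ℝ, ρ₀ ≤ ρ →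
      c₁ * ρ ^ ((N:ℝ) - β - 1) ≤ Jstar ρ ∧ Jstar ρ ≤ c₂ * ρ ^ ((N:ℝ) - β - 1) := by
  set α : ℝ := ((N:ℝ) - 3) / 2 with hαdef
  have hN' : (2 : ℝ) ≤ N := by exact_mod_cast hN
  have hα : -1 < α := by rw [hαdef]; linarith
  have hαβ : 2 * α + (1 - β) < -1 := by rw [hαdef]; linarith
  set I := ∫ ξ in Ioi (1 : ℝ), (ξ ^ 2 - 1) ^ α * ξ ^ (1 - β)
  have hI : 0 < I := integral_Ioi_one_sq_sub_one_rpow_mul_rpow_pos hα hαβ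
  set ω := unitSphereArea (N - 1)
  have hω : 0 < ω := unitSphereArea_pos (by omega)
  refine ⟨ω * C₁ * I, by positivity, ω * C₂ * I, by positivity, max R₀ 1, by positivity,
    fun ρ hρ => ?_⟩
  have hρ0 : 0 < ρ := one_pos.trans_le (le_of_max_le_right hρ)
  obtain ⟨hlow, hup⟩ := integral_Ioi_sq_sub_sq_rpow_mul_mul_bounds hJm hα hαβ hρ0
    fun r hr => hbb r ((le_of_max_le_left hρ).trans hr.le)
  rw [show 2 * α + 2 - β = (N : ℝ) - β - 1 by rw [hαdef]; ring] at hlow hup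
  rw [hJs ρ hρ0]
  constructor <;>
    linarith [mul_le_mul_of_nonneg_left hlow hω.le, mul_le_mul_of_nonneg_left hup hω.le]

/-- If `C₁ r^{-β} ≤ J(r) ≤ C₂ r^{-β}` for large `r`, with `N < β ≤ N+1`, then
`J_*(ρ) ≍ ρ^{N-β-1}` for `ρ` large. -/
theorem stmt13 (N : ℕ) (hN : 2 ≤ N) (J : ℝ → ℝ) (hJm : Measurable J)
    (hJnn : ∀ r, 0 ≤ J r)
    (C₁ C₂ R₀ β : ℝ) (hC₁ : 0 < C₁) (hC₂ : 0 < C₂) (hR₀ : 1 ≤ R₀)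
    (hβl : (N:ℝ) < β) (hβu : β ≤ (N:ℝ) + 1)
    (hbb : ∀ r : ℝ, R₀ ≤ r → C₁ * r ^ (-β) ≤ J r ∧ J r ≤ C₂ * r ^ (-β))
    (hintJ : IntegrableOn (fun r => J r * r ^ (N - 1)) (Set.Ioi 0))
    (Jstar : ℝ → ℝ)
    (hJs : ∀ ρ : ℝ, 0 < ρ → Jstar ρ =
      unitSphereArea (N - 1) *
        ∫ r in Set.Ioi ρ, (r ^ 2 - ρ ^ 2) ^ (((N:ℝ) - 3) / 2) * r * J r) :
    ∃ c₁ > (0:ℝ), ∃ c₂ > (0:ℝ), ∃ ρ₀ > (0:ℝ), ∀ ρ : ℝ, ρ₀ ≤ ρ →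
      c₁ * ρ ^ ((N:ℝ) - β - 1) ≤ Jstar ρ ∧ Jstar ρ ≤ c₂ * ρ ^ ((N:ℝ) - β - 1) :=
  stmt13_general N hN J hJm C₁ C₂ R₀ β hC₁ hC₂ hβl hbb Jstar hJs
end

section
/- Let N ≥ 3 and let J be continuous, bounded, nonnegative on ℝ₊ with C₁ η^{-β} ≤ J(η) ≤ C₂ η^{-β} for η ≥ 1 and some β ∈ (N, N+1]. Then there exists C > 0 such that for all r, ρ > 0 with |ρ - r| ≥ 1, J̃(r,ρ) ≤ C (ρ/r)^{(N-1)/2} |ρ - r|^{N-β-1}. -/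
open MeasureTheory

private lemma alg_aux {n r ρ : ℝ} (hn : 3 ≤ n) (hr : 0 < r) (hρ : 0 < ρ) :
    (2:ℝ) ^ (3 - n) * (ρ / r ^ (n - 2)) * (4 * r * ρ) ^ ((n - 3) / 2)
      = (ρ / r) ^ ((n - 1) / 2) := by
  have h4 : (0:ℝ) < 4 * r * ρ := by positivity
  have hrp : (0:ℝ) < r ^ (n - 2) := Real.rpow_pos_of_pos hr _
  have hL : 0 < (2:ℝ) ^ (3 - n) * (ρ / r ^ (n - 2)) * (4 * r * ρ) ^ ((n - 3) / 2) := by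
    positivity
  have hR : 0 < (ρ / r) ^ ((n - 1) / 2) := by positivity
  rw [← Real.exp_log hL, ← Real.exp_log hR]
  congr 1
  rw [Real.log_mul (by positivity) (by positivity),
    Real.log_mul (by positivity) (by positivity),
    Real.log_rpow two_pos, Real.log_rpow h4, Real.log_rpow (div_pos hρ hr),
    Real.log_div hρ.ne' hrp.ne', Real.log_rpow hr,
    Real.log_div hρ.ne' hr.ne',
    Real.log_mul (by positivity : (4:ℝ) * r ≠ 0) hρ.ne',
    Real.log_mul (by norm_num : (4:ℝ) ≠ 0) hr.ne']
  have h42 : Real.log 4 = 2 * Real.log 2 := by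
    rw [show (4:ℝ) = 2 ^ (2:ℕ) by norm_num, Real.log_pow]; push_cast; ring
  rw [h42]; ring

/-- For `N ≥ 3` and `J(η) ≍ η^{-β}` with `β ∈ (N, N+1]`, there is `C > 0` such that
`J̃(r,ρ) ≤ C (ρ/r)^{(N-1)/2} |ρ-r|^{N-β-1}` whenever `|ρ-r| ≥ 1`. -/
theorem stmt15 (N : ℕ) (hN : 3 ≤ N) (J : ℝ → ℝ) (hJc : Continuous J)
    (hJb : ∃ M, ∀ η, |J η| ≤ M) (hJnn : ∀ η, 0 ≤ J η)
    (C₁ C₂ β : ℝ) (hC₁ : 0 < C₁) (hC₂ : 0 < C₂)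
    (hβl : (N:ℝ) < β) (hβu : β ≤ (N:ℝ) + 1)
    (hbb : ∀ η : ℝ, 1 ≤ η → C₁ * η ^ (-β) ≤ J η ∧ J η ≤ C₂ * η ^ (-β)) :
    ∃ C > (0:ℝ), ∀ r ρ : ℝ, 0 < r → 0 < ρ → 1 ≤ |ρ - r| →
      unitSphereArea (N - 1) * (2:ℝ) ^ ((3:ℝ) - (N:ℝ)) * (ρ / r ^ (N - 2)) *
          (∫ η in Set.Ioo |ρ - r| (ρ + r),
            (((ρ + r) ^ 2 - η ^ 2) * (η ^ 2 - (ρ - r) ^ 2)) ^ (((N:ℝ) - 3) / 2) * (η * J η))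
        ≤ C * (ρ / r) ^ (((N:ℝ) - 1) / 2) * |ρ - r| ^ ((N:ℝ) - β - 1) := by
  have hN3 : (3:ℝ) ≤ (N:ℝ) := by exact_mod_cast hN
  have hω : 0 < unitSphereArea (N - 1) := by
    unfold unitSphereArea
    have h1 : 0 < volume (Metric.ball (0 : EuclideanSpace ℝ (Fin (N-1))) 1) :=
      Metric.measure_ball_pos volume 0 one_pos
    have h2 : (0:ℝ) < ((N - 1 : ℕ) : ℝ) := by
      have : 0 < N - 1 := by omega
      exact_mod_cast this
    exact mul_pos h2 (ENNReal.toReal_pos h1.ne' measure_ball_lt_top.ne)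
  have hd : 0 < β + 1 - (N:ℝ) := by linarith
  refine ⟨unitSphereArea (N-1) * C₂ / (β + 1 - (N:ℝ)), by positivity, ?_⟩
  intro r ρ hr hρ h1
  set a := |ρ - r| with ha
  have ha0 : (0:ℝ) < a := lt_of_lt_of_le one_pos h1
  have hab : a < ρ + r := by
    rw [ha, abs_sub_lt_iff]; constructor <;> linarith
  set p := ((N:ℝ) - 3)/2 with hp
  have hp0 : (0:ℝ) ≤ p := by rw [hp]; linarith
  have hK0 : (0:ℝ) < (4*r*ρ) ^ p := Real.rpow_pos_of_pos (by positivity) _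
  set c := (N:ℝ) - 2 - β with hcdef
  have hc1 : c < -1 := by rw [hcdef]; linarith
  -- pointwise bound
  have hfg : ∀ η ∈ Set.Ioo a (ρ + r),
      (((ρ + r) ^ 2 - η ^ 2) * (η ^ 2 - (ρ - r) ^ 2)) ^ p * (η * J η)
        ≤ (4*r*ρ) ^ p * C₂ * η ^ c := by
    intro η hη
    obtain ⟨h1', h2'⟩ := hη
    have hη0 : (0:ℝ) < η := lt_trans ha0 h1'
    have hη1 : (1:ℝ) ≤ η := le_trans h1 h1'.le
    have hsq : (ρ - r)^2 = a^2 := (sq_abs _).symm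
    have hbase1nn : (0:ℝ) ≤ (ρ + r)^2 - η^2 := by nlinarith
    have hbase2nn : (0:ℝ) ≤ η^2 - (ρ - r)^2 := by rw [hsq]; nlinarith
    have hbase : ((ρ + r) ^ 2 - η ^ 2) * (η ^ 2 - (ρ - r) ^ 2) ≤ (4*r*ρ) * η^2 := by
      have h1'' : a^2 ≤ η^2 := by nlinarith
      have hb2 : (ρ + r)^2 - a^2 = 4*r*ρ := by rw [← hsq]; ring
      nlinarith
    have hstep1 : (((ρ + r) ^ 2 - η ^ 2) * (η ^ 2 - (ρ - r) ^ 2)) ^ p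
        ≤ (4*r*ρ) ^ p * η ^ ((N:ℝ) - 3) := by
      have := Real.rpow_le_rpow (mul_nonneg hbase1nn hbase2nn) hbase hp0
      refine le_trans this ?_
      rw [Real.mul_rpow (by positivity) (by positivity)]
      apply mul_le_mul_of_nonneg_left _ hK0.le
      rw [show (η^2 : ℝ) = η ^ (2:ℝ) by rw [← Real.rpow_natCast η 2]; norm_num,
        ← Real.rpow_mul hη0.le]
      rw [show (2:ℝ) * p = (N:ℝ) - 3 by rw [hp]; ring]
    have hJle : J η ≤ C₂ * η ^ (-β) := (hbb η hη1).2
    calc (((ρ + r) ^ 2 - η ^ 2) * (η ^ 2 - (ρ - r) ^ 2)) ^ p * (η * J η)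
        ≤ ((4*r*ρ) ^ p * η ^ ((N:ℝ) - 3)) * (η * (C₂ * η ^ (-β))) := by
          apply mul_le_mul hstep1 (mul_le_mul_of_nonneg_left hJle hη0.le)
            (mul_nonneg hη0.le (hJnn η)) (by positivity)
      _ = (4*r*ρ) ^ p * C₂ * (η ^ ((N:ℝ) - 3) * η ^ (1:ℝ) * η ^ (-β)) := by
          rw [Real.rpow_one]; ring
      _ = (4*r*ρ) ^ p * C₂ * η ^ c := by
          rw [← Real.rpow_add hη0, ← Real.rpow_add hη0]
          congr 1
          rw [hcdef]; ring
  -- integrability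
  have hfc : Continuous (fun η : ℝ =>
      (((ρ + r) ^ 2 - η ^ 2) * (η ^ 2 - (ρ - r) ^ 2)) ^ p * (η * J η)) := by
    apply Continuous.mul
    · exact Continuous.rpow_const
        ((continuous_const.sub (continuous_pow 2)).mul
          ((continuous_pow 2).sub continuous_const)) (fun x => Or.inr hp0)
    · exact continuous_id.mul hJc
  have hfint : IntegrableOn (fun η : ℝ =>
      (((ρ + r) ^ 2 - η ^ 2) * (η ^ 2 - (ρ - r) ^ 2)) ^ p * (η * J η))
      (Set.Ioo a (ρ + r)) := by
    have := hfc.intervalIntegrable (μ := volume) a (ρ + r)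
    rwa [intervalIntegrable_iff_integrableOn_Ioo_of_le hab.le] at this
  have h0uIcc : (0:ℝ) ∉ Set.uIcc a (ρ + r) := by
    rw [Set.uIcc_of_le hab.le]
    intro h
    exact absurd h.1 (by linarith)
  have hgint : IntegrableOn (fun η : ℝ => (4*r*ρ) ^ p * C₂ * η ^ c)
      (Set.Ioo a (ρ + r)) := by
    have h2 := (intervalIntegral.intervalIntegrable_rpow (μ := volume) (a := a) (b := ρ + r)
      (r := c) (Or.inr h0uIcc)).const_mul ((4*r*ρ) ^ p * C₂)
    rwa [intervalIntegrable_iff_integrableOn_Ioo_of_le hab.le] at h2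
  have hI1 : (∫ η in Set.Ioo a (ρ + r),
      (((ρ + r) ^ 2 - η ^ 2) * (η ^ 2 - (ρ - r) ^ 2)) ^ p * (η * J η))
      ≤ ∫ η in Set.Ioo a (ρ + r), (4*r*ρ) ^ p * C₂ * η ^ c :=
    setIntegral_mono_on hfint hgint measurableSet_Ioo hfg
  have hI2 : (∫ η in Set.Ioo a (ρ + r), (4*r*ρ) ^ p * C₂ * η ^ c)
      = (4*r*ρ) ^ p * C₂ * (((ρ + r) ^ (c+1) - a ^ (c+1))/(c+1)) := by
    rw [MeasureTheory.integral_const_mul]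
    congr 1
    rw [← MeasureTheory.integral_Ioc_eq_integral_Ioo,
      ← intervalIntegral.integral_of_le hab.le]
    exact integral_rpow (Or.inr ⟨hc1.ne, h0uIcc⟩)
  have hI3 : ((ρ + r) ^ (c+1) - a ^ (c+1))/(c+1) ≤ a ^ (c+1) / (β + 1 - (N:ℝ)) := by
    have hcn : c + 1 = -(β + 1 - (N:ℝ)) := by rw [hcdef]; ring
    have hb1 : (0:ℝ) ≤ (ρ + r) ^ (c+1) := Real.rpow_nonneg (by linarith) _
    have key : ∀ A B : ℝ, (B - A)/(c+1) = (A - B) / (β + 1 - (N:ℝ)) := by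
      intro A B
      rw [hcn, div_neg, ← neg_div, neg_sub]
    rw [key]
    exact (div_le_div_iff_of_pos_right hd).mpr (by linarith)
  -- assemble
  have hF : (0:ℝ) ≤ unitSphereArea (N - 1) * (2:ℝ) ^ ((3:ℝ) - (N:ℝ)) * (ρ / r ^ (N - 2)) := by
    positivity
  have hInt : (∫ η in Set.Ioo a (ρ + r),
      (((ρ + r) ^ 2 - η ^ 2) * (η ^ 2 - (ρ - r) ^ 2)) ^ p * (η * J η))
      ≤ (4*r*ρ) ^ p * C₂ * (a ^ (c+1) / (β + 1 - (N:ℝ))) := by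
    refine hI1.trans ?_
    rw [hI2]
    exact mul_le_mul_of_nonneg_left hI3 (by positivity)
  refine le_trans (mul_le_mul_of_nonneg_left hInt hF) (le_of_eq ?_)
  have hrpow : r ^ (N - 2) = r ^ ((N:ℝ) - 2) := by
    rw [← Real.rpow_natCast r (N - 2)]
    congr 1
    have : ((N - 2 : ℕ) : ℝ) = (N:ℝ) - 2 := by
      have h2 : 2 ≤ N := by omega
      push_cast [Nat.cast_sub h2]
      ring
    exact this
  have halg := alg_aux (n := (N:ℝ)) (r := r) (ρ := ρ) hN3 hr hρ
  rw [hrpow]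
  have hexp : (N:ℝ) - β - 1 = c + 1 := by rw [hcdef]; ring
  rw [hexp]
  rw [hp]
  calc unitSphereArea (N - 1) * (2:ℝ) ^ ((3:ℝ) - (N:ℝ)) * (ρ / r ^ ((N:ℝ) - 2)) *
        ((4*r*ρ) ^ (((N:ℝ) - 3)/2) * C₂ * (a ^ (c+1) / (β + 1 - (N:ℝ))))
      = unitSphereArea (N - 1) * C₂ / (β + 1 - (N:ℝ)) *
        ((2:ℝ) ^ ((3:ℝ) - (N:ℝ)) * (ρ / r ^ ((N:ℝ) - 2)) * (4*r*ρ) ^ (((N:ℝ) - 3)/2)) *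
        a ^ (c+1) := by ring
    _ = unitSphereArea (N - 1) * C₂ / (β + 1 - (N:ℝ)) * (ρ / r) ^ (((N:ℝ) - 1) / 2) *
        a ^ (c+1) := by rw [halg]
end

section
/- Let T > 0, d > 0, g, h ∈ C([0,T]) with g(0) ≤ h(0) and g(t) < h(t) for t ∈ (0,T]. Let P ∈ C(ℝ²) ∩ L^∞(ℝ²) be nonnegative with P(x,x) > 0 for a.e. x. Let D_T = {(t,x) : t ∈ (0,T], g(t) < x < h(t)}, φ, φ_t ∈ C(closure of D_T), c ∈ L^∞(D_T), and suppose φ_t ≥ d ∫_{g(t)}^{h(t)} P(x,y)φ(t,y) dy + c(t,x)φ in D_T, φ(t, g(t)) ≥ 0 on the set of times where g strictly decreases from the left, φ(t, h(t)) ≥ 0 on the set of times where h strictly increases from the left, and φ(0,x) ≥ 0 on [g(0), h(0)]. Then φ ≥ 0 on the closure of D_T. -/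
open MeasureTheory Set

/-!
Put `w = e^{-kt} φ` with `k` large. If `w` had a negative minimum `m` on the closed domain, then
wherever `w ≤ m / 4` in the open domain the inequality forces `∂ₜ w ≥ -m`: the nonlocal term is
at least `-d ‖P‖_∞ |m| e^{kt} (h - g)`, and `k` absorbs it together with the reaction term.
Let `τ` be the first time at which `w` comes down to `m / 2`, at a point `(τ, ξ)`; the initial
condition gives `τ > 0`. Near `(τ, ξ)` we have `φ < 0`, so no nearby boundary point is one where
`g` strictly decreases, or `h` strictly increases, from the left. A first-hitting-time argument
then shows that the boundary cannot cross the short segments `[τ - ρ, τ] × {y}` for `y` on one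
side of `ξ`. Along such a segment `w` starts above `m / 2` and grows by at least `-m ρ`, which
contradicts the continuity of `w` at `(τ, ξ)`.
-/

lemma exists_first_eq_of_lt_of_le {f : ℝ → ℝ} {a b c : ℝ} (hab : a ≤ b)
    (hf : ContinuousOn f (Icc a b)) (ha : c < f a) (hb : f b ≤ c) :
    ∃ β ∈ Ioc a b, f β = c ∧ ∀ s ∈ Ico a β, c < f s := by
  set A := {s ∈ Icc a b | f s ≤ c}
  have hA : IsClosed A := isClosed_Icc.isClosed_le hf continuousOn_const
  have hbA : b ∈ A := ⟨right_mem_Icc.2 hab, hb⟩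
  have hAbdd : BddBelow A := ⟨a, fun s hs => hs.1.1⟩
  have hβA : sInf A ∈ A := hA.csInf_mem ⟨b, hbA⟩ hAbdd
  have hbefore : ∀ s ∈ Ico a (sInf A), c < f s := fun s hs => not_le.1 fun hsc =>
    (csInf_le hAbdd ⟨⟨hs.1, hs.2.le.trans hβA.1.2⟩, hsc⟩).not_gt hs.2
  have haβ : a < sInf A := hβA.1.1.lt_of_ne fun h => (h ▸ hβA.2).not_gt ha
  obtain ⟨s, hs, hsc⟩ := intermediate_value_Icc' haβ.le (hf.mono (Icc_subset_Icc_right hβA.1.2))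
    ⟨hβA.2, ha.le⟩
  have hsβ : s = sInf A := le_antisymm hs.2 (csInf_le hAbdd ⟨⟨hs.1, hs.2.trans hβA.1.2⟩, hsc.le⟩)
  exact ⟨sInf A, ⟨haβ, hβA.1.2⟩, hsβ ▸ hsc, hbefore⟩

lemma exists_first_time_le {X : Type*} [TopologicalSpace X] [T2Space X] {K : Set (ℝ × X)}
    {w : ℝ × X → ℝ} {a : ℝ} (hK : IsCompact K) (hw : ContinuousOn w K) (hne : ∃ q ∈ K, w q ≤ a) :
    ∃ p ∈ K, w p ≤ a ∧ ∀ q ∈ K, q.1 < p.1 → a < w q := by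
  have hS : IsCompact {q ∈ K | w q ≤ a} :=
    hK.of_isClosed_subset (hK.isClosed.isClosed_le hw continuousOn_const) (sep_subset _ _)
  obtain ⟨p, ⟨hpK, hpa⟩, hmin⟩ := hS.exists_isMinOn hne continuous_fst.continuousOn
  exact ⟨p, hpK, hpa, fun q hq hqp => not_le.1 fun hqa => (hmin ⟨hq, hqa⟩).not_gt hqp⟩

lemma isCompact_setOf_mem_Icc {I : Set ℝ} {g h : ℝ → ℝ} (hI : IsCompact I)
    (hg : ContinuousOn g I) (hh : ContinuousOn h I) :
    IsCompact {p : ℝ × ℝ | p.1 ∈ I ∧ p.2 ∈ Icc (g p.1) (h p.1)} := by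
  obtain ⟨A, hA⟩ := hI.bddBelow_image hg
  obtain ⟨B, hB⟩ := hI.bddAbove_image hh
  have hIR : IsClosed (I ×ˢ univ : Set (ℝ × ℝ)) := hI.isClosed.prod isClosed_univ
  have hfst : MapsTo Prod.fst (I ×ˢ univ : Set (ℝ × ℝ)) I := fun p hp => hp.1
  have hclosed := (hIR.isClosed_le (hg.comp continuousOn_fst hfst) continuousOn_snd).inter
    (hIR.isClosed_le continuousOn_snd (hh.comp continuousOn_fst hfst))
  refine (hI.prod (isCompact_Icc (a := A) (b := B))).of_isClosed_subset ?_ ?_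
  · convert hclosed using 1
    ext p
    simp only [mem_ofPred_eq, mem_inter_iff, mem_prod, mem_univ, and_true, mem_Icc]
    tauto
  · rintro p ⟨hp, hgp, hph⟩
    exact ⟨hp, (hA (mem_image_of_mem g hp)).trans hgp, hph.trans (hB (mem_image_of_mem h hp))⟩

lemma add_mul_le_of_le_hasDerivAt {u : ℝ → ℝ} {a b η : ℝ} (hab : a ≤ b)
    (hu : ContinuousOn u (Icc a b))
    (hder : ∀ s ∈ Ioo a b, ∃ u', HasDerivAt u u' s ∧ η ≤ u') :
    u a + η * (b - a) ≤ u b := by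
  have hint : interior (Icc a b) = Ioo a b := interior_Icc
  have := (convex_Icc a b).mul_sub_le_image_sub_of_le_deriv hu
    (fun s hs => by
      obtain ⟨u', hu', -⟩ := hder s (hint ▸ hs)
      exact hu'.differentiableAt.differentiableWithinAt)
    (fun s hs => by
      obtain ⟨u', hu', hηu'⟩ := hder s (hint ▸ hs)
      exact hu'.deriv ▸ hηu')
    a (left_mem_Icc.2 hab) b (right_mem_Icc.2 hab) hab
  linarith

lemma neg_mul_le_setIntegral_mul {u v : ℝ → ℝ} {a b A M : ℝ} (hab : a ≤ b)
    (hu : ContinuousOn u (Icc a b)) (hv : ContinuousOn v (Icc a b))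
    (hu0 : ∀ y ∈ Icc a b, 0 ≤ u y) (huA : ∀ y ∈ Icc a b, u y ≤ A)
    (hM : 0 ≤ M) (hvM : ∀ y ∈ Icc a b, -M ≤ v y) :
    -(A * M) * (b - a) ≤ ∫ y in Ioo a b, u y * v y := by
  have hle : ∀ y ∈ Ioo a b, -(A * M) ≤ u y * v y := fun y hy => by
    have hy' := Ioo_subset_Icc_self hy
    nlinarith [hu0 y hy', huA y hy', hvM y hy']
  have := setIntegral_ge_of_const_le_real (μ := volume) measurableSet_Ioo
    measure_Ioo_lt_top.ne hle ((hu.mul hv).integrableOn_Icc.mono_set Ioo_subset_Icc_self)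
  rwa [Real.volume_real_Ioo_of_le hab] at this

lemma exists_interior_segments_above {g h : ℝ → ℝ} {T τ ξ δ : ℝ} (hτ : τ ∈ Ioc 0 T)
    (hg : ContinuousOn g (Icc 0 T)) (hh : ContinuousOn h (Icc 0 T))
    (hgξ : g τ ≤ ξ) (hξh : ξ < h τ) (hδ : 0 < δ)
    (hno : ∀ β ∈ Ioc 0 τ, τ - δ < β → |g β - ξ| < δ →
      ¬ ∃ ε > 0, ∀ s ∈ Ico (β - ε) β, g β < g s) :
    ∃ ρ ∈ Ioc 0 δ, ∀ y ∈ Ioc ξ (ξ + ρ), ∀ s ∈ Icc (τ - ρ) τ, g s < y ∧ y < h s := by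
  obtain ⟨r, hr, hhr⟩ := Metric.continuousWithinAt_iff.1 (hh τ ⟨hτ.1.le, hτ.2⟩)
    ((h τ - ξ) / 2) (by linarith)
  set ρ := min (min δ τ) (min (r / 2) ((h τ - ξ) / 2))
  have hρ : 0 < ρ := lt_min (lt_min hδ hτ.1) (lt_min (by linarith) (by linarith))
  have hρδ : ρ ≤ δ := (min_le_left _ _).trans (min_le_left _ _)
  have hρτ : ρ ≤ τ := (min_le_left _ _).trans (min_le_right _ _)
  have hρr : ρ ≤ r / 2 := (min_le_right _ _).trans (min_le_left _ _)
  have hρh : ρ ≤ (h τ - ξ) / 2 := (min_le_right _ _).trans (min_le_right _ _)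
  have hsI : ∀ s ∈ Icc (τ - ρ) τ, s ∈ Icc 0 T := fun s hs => ⟨by linarith [hs.1], hs.2.trans hτ.2⟩
  refine ⟨ρ, ⟨hρ, hρδ⟩, fun y hy s hs => ⟨?_, ?_⟩⟩
  · by_contra! hys
    -- the first time after `s` at which `g` comes down to `(ξ + y) / 2` is a strict left minimum
    obtain ⟨β, hβ, hgβ, hgβs⟩ := exists_first_eq_of_lt_of_le (c := (ξ + y) / 2) hs.2
      (hg.mono fun t ht => ⟨(hsI s hs).1.trans ht.1, ht.2.trans hτ.2⟩) (by linarith [hy.1])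
      (by linarith [hy.1])
    refine hno β ⟨(hsI s hs).1.trans_lt hβ.1, hβ.2⟩ (by linarith [hs.1, hβ.1])
      (by rw [hgβ, abs_of_pos (by linarith [hy.1])]; linarith [hy.2])
      ⟨β - s, by linarith [hβ.1], ?_⟩
    intro t ht
    rw [hgβ]
    exact hgβs t ⟨by linarith [ht.1], ht.2⟩
  · have := hhr (hsI s hs) (by
      rw [Real.dist_eq, abs_of_nonpos (by linarith [hs.2])]
      linarith [hs.1])
    rw [Real.dist_eq] at this
    linarith [(abs_lt.1 this).1, hy.2]

lemma exists_interior_segments {g h : ℝ → ℝ} {T τ ξ δ : ℝ} (hτ : τ ∈ Ioc 0 T)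
    (hg : ContinuousOn g (Icc 0 T)) (hh : ContinuousOn h (Icc 0 T))
    (hgh : g τ < h τ) (hξ : ξ ∈ Icc (g τ) (h τ)) (hδ : 0 < δ)
    (hgno : ∀ β ∈ Ioc 0 τ, τ - δ < β → |g β - ξ| < δ →
      ¬ ∃ ε > 0, ∀ s ∈ Ico (β - ε) β, g β < g s)
    (hhno : ∀ β ∈ Ioc 0 τ, τ - δ < β → |h β - ξ| < δ →
      ¬ ∃ ε > 0, ∀ s ∈ Ico (β - ε) β, h s < h β) :
    ∃ ρ ∈ Ioc 0 δ, ∀ ε > 0, ∃ y, |y - ξ| < ε ∧ ∀ s ∈ Icc (τ - ρ) τ, g s < y ∧ y < h s := by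
  rcases lt_or_eq_of_le hξ.2 with hξh | hξh
  · obtain ⟨ρ, hρ, hsegs⟩ := exists_interior_segments_above hτ hg hh hξ.1 hξh hδ hgno
    refine ⟨ρ, hρ, fun ε hε => ⟨ξ + min ρ (ε / 2), ?_, hsegs _ ⟨?_, ?_⟩⟩⟩
    · rw [add_sub_cancel_left, abs_of_pos (lt_min hρ.1 (half_pos hε))]
      exact (min_le_right _ _).trans_lt (half_lt_self hε)
    · linarith [lt_min hρ.1 (half_pos hε)]
    · linarith [min_le_left ρ (ε / 2)]
  · -- at the upper boundary, reflect `x ↦ -x`, which exchanges the roles of `g` and `h`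
    obtain ⟨ρ, hρ, hsegs⟩ := exists_interior_segments_above (g := fun t => -h t)
      (h := fun t => -g t) (ξ := -ξ) hτ hh.neg hg.neg (by simp [hξh]) (by simp [hξh ▸ hgh]) hδ
      fun β hβ hβδ hβξ hmax => hhno β hβ hβδ (by rwa [neg_sub_neg, abs_sub_comm] at hβξ)
        (by simpa using hmax)
    refine ⟨ρ, hρ, fun ε hε => ⟨ξ - min ρ (ε / 2), ?_, fun s hs => ?_⟩⟩
    · rw [sub_sub_cancel_left, abs_neg, abs_of_pos (lt_min hρ.1 (half_pos hε))]
      exact (min_le_right _ _).trans_lt (half_lt_self hε)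
    · have := hsegs (-(ξ - min ρ (ε / 2))) ⟨by linarith [lt_min hρ.1 (half_pos hε)],
        by linarith [min_le_left ρ (ε / 2)]⟩ s hs
      constructor <;> linarith [this.1, this.2]

def closedDomain (g h : ℝ → ℝ) (T : ℝ) : Set (ℝ × ℝ) :=
  {p | p.1 ∈ Icc 0 T ∧ p.2 ∈ Icc (g p.1) (h p.1)}

lemma exists_interior_segments_of_neg {g h : ℝ → ℝ} {w : ℝ × ℝ → ℝ} {T τ ξ δ : ℝ}
    (hτ : τ ∈ Ioc 0 T) (hgc : ContinuousOn g (Icc 0 T)) (hhc : ContinuousOn h (Icc 0 T))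
    (hgh : ∀ t ∈ Ioc 0 T, g t < h t) (hξ : ξ ∈ Icc (g τ) (h τ)) (hδ : 0 < δ)
    (hbg : ∀ t ∈ Ioc 0 T, (∃ ε > 0, ∀ s ∈ Ico (t - ε) t, g t < g s) → 0 ≤ w (t, g t))
    (hbh : ∀ t ∈ Ioc 0 T, (∃ ε > 0, ∀ s ∈ Ico (t - ε) t, h s < h t) → 0 ≤ w (t, h t))
    (hneg : ∀ q ∈ closedDomain g h T, dist q (τ, ξ) < δ → w q < 0) :
    ∃ ρ ∈ Ioc 0 δ, ∀ ε > 0, ∃ y, |y - ξ| < ε ∧ ∀ s ∈ Icc (τ - ρ) τ, g s < y ∧ y < h s := by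
  have hβT : ∀ β ∈ Ioc 0 τ, β ∈ Ioc 0 T := fun β hβ => ⟨hβ.1, hβ.2.trans hτ.2⟩
  have hbdry : ∀ β ∈ Ioc 0 τ, τ - δ < β → ∀ x ∈ Icc (g β) (h β), |x - ξ| < δ → w (β, x) < 0 :=
    fun β hβ hβδ x hx hxξ => hneg (β, x) ⟨⟨hβ.1.le, (hβT β hβ).2⟩, hx⟩ (by
      rw [Prod.dist_eq]
      refine max_lt ?_ hxξ
      rw [Real.dist_eq, abs_of_nonpos (by linarith [hβ.2])]
      linarith)
  exact exists_interior_segments hτ hgc hhc (hgh τ hτ) hξ hδ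
    (fun β hβ hβδ hgβ hstrict => (hbdry β hβ hβδ (g β) ⟨le_rfl, (hgh β (hβT β hβ)).le⟩ hgβ).not_ge
      (hbg β (hβT β hβ) hstrict))
    (fun β hβ hβδ hhβ hstrict => (hbdry β hβ hβδ (h β) ⟨(hgh β (hβT β hβ)).le, le_rfl⟩ hhβ).not_ge
      (hbh β (hβT β hβ) hstrict))

lemma lt_of_growth_along_segments {K : Set (ℝ × ℝ)} {w : ℝ × ℝ → ℝ} {τ ξ ρ η a : ℝ}
    (hρ : 0 < ρ) (hη : 0 < η) (hw : ContinuousOn w K) (hK : (τ, ξ) ∈ K)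
    (hseg : ∀ ε > 0, ∃ y, |y - ξ| < ε ∧ (∀ s ∈ Icc (τ - ρ) τ, (s, y) ∈ K) ∧
      a ≤ w (τ - ρ, y) ∧ ∀ s ∈ Ioo (τ - ρ) τ, ∃ w', HasDerivAt (fun s => w (s, y)) w' s ∧ η ≤ w') :
    a < w (τ, ξ) := by
  obtain ⟨δ, hδ, hnear⟩ := Metric.continuousWithinAt_iff.1 (hw _ hK) (η * ρ) (by positivity)
  obtain ⟨y, hy, hyK, hstart, hder⟩ := hseg δ hδ
  have hgrowth := add_mul_le_of_le_hasDerivAt (u := fun s => w (s, y)) (by linarith : τ - ρ ≤ τ)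
    (hw.comp (continuous_id.prodMk continuous_const).continuousOn hyK) hder
  rw [sub_sub_cancel] at hgrowth
  have hclose := hnear (hyK τ ⟨by linarith, le_rfl⟩) (by
    rw [Prod.dist_eq, dist_self]
    exact max_lt hδ hy)
  linarith [(abs_lt.1 hclose).2]

theorem nonneg_of_growth_near_negative_min {g h : ℝ → ℝ} {T : ℝ} {w : ℝ × ℝ → ℝ}
    (hgc : ContinuousOn g (Icc 0 T)) (hhc : ContinuousOn h (Icc 0 T))
    (hgh : ∀ t ∈ Ioc 0 T, g t < h t) (hw : ContinuousOn w (closedDomain g h T))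
    (hgrowth : ∀ m < 0, (∀ q ∈ closedDomain g h T, m ≤ w q) → ∃ η > 0,
      ∀ t ∈ Ioc 0 T, ∀ x ∈ Ioo (g t) (h t), w (t, x) ≤ m / 4 →
        ∃ w', HasDerivAt (fun s => w (s, x)) w' t ∧ η ≤ w')
    (hbg : ∀ t ∈ Ioc 0 T, (∃ ε > 0, ∀ s ∈ Ico (t - ε) t, g t < g s) → 0 ≤ w (t, g t))
    (hbh : ∀ t ∈ Ioc 0 T, (∃ ε > 0, ∀ s ∈ Ico (t - ε) t, h s < h t) → 0 ≤ w (t, h t))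
    (hinit : ∀ x ∈ Icc (g 0) (h 0), 0 ≤ w (0, x)) :
    ∀ p ∈ closedDomain g h T, 0 ≤ w p := by
  set K := closedDomain g h T
  have hK : IsCompact K := isCompact_setOf_mem_Icc isCompact_Icc hgc hhc
  by_contra! ⟨p, hpK, hp⟩
  obtain ⟨pm, hpmK, hmin⟩ := hK.exists_isMinOn ⟨p, hpK⟩ hw
  have hm : w pm < 0 := (hmin hpK).trans_lt hp
  obtain ⟨η, hη, hgrow⟩ := hgrowth (w pm) hm fun q hq => hmin hq
  obtain ⟨⟨τ, ξ⟩, hτξ, hwτξ, hfirst⟩ :=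
    exists_first_time_le (a := w pm / 2) hK hw ⟨pm, hpmK, by linarith⟩
  have ⟨⟨hτ0, hτT⟩, hξ⟩ := hτξ
  have hτ : 0 < τ := hτ0.lt_of_ne fun h0 => by subst h0; linarith [hinit ξ hξ]
  obtain ⟨δ, hδ, hnear⟩ := Metric.continuousWithinAt_iff.1 (hw _ hτξ) (-(w pm) / 4) (by linarith)
  have hneg : ∀ q ∈ K, dist q (τ, ξ) < δ → w q ≤ w pm / 4 := fun q hq hqd => by
    linarith [(abs_lt.1 (hnear hq hqd)).2]
  obtain ⟨ρ, ⟨hρ, hρδ⟩, hsegs⟩ := exists_interior_segments_of_neg (δ := min (δ / 2) τ)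
    ⟨hτ, hτT⟩ hgc hhc hgh hξ (lt_min (half_pos hδ) hτ) hbg hbh fun q hq hqd =>
      (hneg q hq (hqd.trans_le ((min_le_left _ _).trans (half_le_self hδ.le)))).trans_lt
        (by linarith)
  have hρ' : ρ ≤ δ / 2 ∧ ρ ≤ τ := le_min_iff.1 hρδ
  refine (lt_of_growth_along_segments hρ hη hw hτξ fun ε hε => ?_).not_ge hwτξ
  obtain ⟨y, hy, hys⟩ := hsegs (min ε (δ / 2)) (lt_min hε (half_pos hδ))
  have hseg : ∀ s ∈ Icc (τ - ρ) τ, (s, y) ∈ K ∧ dist (s, y) (τ, ξ) < δ := fun s hs =>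
    ⟨⟨⟨by linarith [hs.1], hs.2.trans hτT⟩, (hys s hs).1.le, (hys s hs).2.le⟩, by
      rw [Prod.dist_eq]
      refine max_lt ?_ (by rw [Real.dist_eq]; linarith [min_le_right ε (δ / 2)])
      rw [Real.dist_eq, abs_of_nonpos (by linarith [hs.2])]
      linarith [hs.1]⟩
  refine ⟨y, hy.trans_le (min_le_left _ _), fun s hs => (hseg s hs).1,
    (hfirst _ (hseg _ ⟨le_rfl, by linarith⟩).1 (sub_lt_self τ hρ)).le, fun s hs => ?_⟩
  have hs' := Ioo_subset_Icc_self hs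
  exact hgrow s ⟨by linarith [hs.1], hs.2.le.trans hτT⟩ y (hys s hs') (hneg _ (hseg s hs').1
    (hseg s hs').2)

lemma le_sub_mul_of_nonlocal_le {P φ φt c : ℝ × ℝ → ℝ} {a b d t x k MP Mc L M : ℝ}
    (hab : a ≤ b) (hd : 0 ≤ d) (hPc : Continuous P) (hP0 : ∀ p, 0 ≤ P p)
    (hPM : ∀ p, P p ≤ MP) (hφ : ContinuousOn (fun y => φ (t, y)) (Icc a b))
    (hL : b - a ≤ L) (hc : c (t, x) ≤ Mc) (hk : Mc + 4 * (d * MP * L + 1) ≤ k) (hM : 0 ≤ M)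
    (hlow : ∀ y ∈ Icc a b, -M ≤ φ (t, y)) (hx : φ (t, x) ≤ -M / 4)
    (hineq : d * (∫ y in Ioo a b, P (x, y) * φ (t, y)) + c (t, x) * φ (t, x) ≤ φt (t, x)) :
    M ≤ φt (t, x) - k * φ (t, x) := by
  have hMP : 0 ≤ MP := (hP0 0).trans (hPM 0)
  have hL0 : 0 ≤ L := by linarith
  have hint := neg_mul_le_setIntegral_mul (u := fun y => P (x, y)) hab
    (hPc.comp (Continuous.prodMk_right x)).continuousOn hφ (fun y _ => hP0 (x, y))
    (fun y _ => hPM (x, y)) hM hlow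
  have hnonlocal : -(d * MP * L * M) ≤ d * ∫ y in Ioo a b, P (x, y) * φ (t, y) := by
    have : MP * M * (b - a) ≤ MP * M * L := mul_le_mul_of_nonneg_left hL (by positivity)
    nlinarith [mul_le_mul_of_nonneg_left hint hd]
  have hreaction : (d * MP * L + 1) * M ≤ (c (t, x) - k) * φ (t, x) := by
    nlinarith [mul_nonneg (mul_nonneg hd hMP) hL0]
  linarith

lemma exists_growth_of_exp_neg_mul {g h : ℝ → ℝ} {T d k MP Mc L : ℝ} {P φ φt c : ℝ × ℝ → ℝ}
    (hd : 0 ≤ d) (hPc : Continuous P) (hP0 : ∀ p, 0 ≤ P p) (hPM : ∀ p, P p ≤ MP)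
    (hφc : ContinuousOn φ (closedDomain g h T))
    (hderiv : ∀ t ∈ Ioc 0 T, ∀ x ∈ Ioo (g t) (h t),
      HasDerivAt (fun s => φ (s, x)) (φt (t, x)) t)
    (hc : ∀ t ∈ Ioc 0 T, ∀ x ∈ Ioo (g t) (h t), c (t, x) ≤ Mc)
    (hL : ∀ t ∈ Icc 0 T, h t - g t ≤ L) (hk : Mc + 4 * (d * MP * L + 1) ≤ k)
    (hineq : ∀ t ∈ Ioc 0 T, ∀ x ∈ Ioo (g t) (h t),
      d * (∫ y in Ioo (g t) (h t), P (x, y) * φ (t, y)) + c (t, x) * φ (t, x) ≤ φt (t, x))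
    (m : ℝ) (hm : m < 0) (hmin : ∀ q ∈ closedDomain g h T, m ≤ Real.exp (-(k * q.1)) * φ q) :
    ∃ η > 0, ∀ t ∈ Ioc 0 T, ∀ x ∈ Ioo (g t) (h t), Real.exp (-(k * t)) * φ (t, x) ≤ m / 4 →
      ∃ w', HasDerivAt (fun s => Real.exp (-(k * s)) * φ (s, x)) w' t ∧ η ≤ w' := by
  refine ⟨-m, neg_pos.2 hm, fun t ht x hx hwx => ?_⟩
  have hE : 0 < Real.exp (k * t) := Real.exp_pos _
  have hEinv : Real.exp (-(k * t)) = (Real.exp (k * t))⁻¹ := Real.exp_neg _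
  have hslice : ∀ y ∈ Icc (g t) (h t), (t, y) ∈ closedDomain g h T :=
    fun y hy => ⟨⟨ht.1.le, ht.2⟩, hy⟩
  have hlow : ∀ y ∈ Icc (g t) (h t), -(Real.exp (k * t) * -m) ≤ φ (t, y) := fun y hy => by
    have := hmin _ (hslice y hy)
    rw [hEinv, le_inv_mul_iff₀ hE] at this
    linarith
  have hx' : φ (t, x) ≤ -(Real.exp (k * t) * -m) / 4 := by
    rw [hEinv, inv_mul_le_iff₀ hE] at hwx
    linarith
  have hgrowth := le_sub_mul_of_nonlocal_le (hx.1.le.trans hx.2.le) hd hPc hP0 hPM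
    (hφc.comp (Continuous.prodMk_right t).continuousOn hslice) (hL t ⟨ht.1.le, ht.2⟩)
    (hc t ht x hx) hk (mul_nonneg hE.le (neg_nonneg.2 hm.le)) hlow hx' (hineq t ht x hx)
  refine ⟨Real.exp (-(k * t)) * (φt (t, x) - k * φ (t, x)), ?_, ?_⟩
  · exact ((((hasDerivAt_id t).const_mul k).neg.exp).mul (hderiv t ht x hx)).congr_deriv
      (by simp only [id, mul_one, Pi.neg_apply]; ring)
  · rw [hEinv, le_inv_mul_iff₀ hE]
    linarith

theorem stmt16_general (T d : ℝ) (hd : 0 < d)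
    (g h : ℝ → ℝ) (hgc : ContinuousOn g (Set.Icc 0 T)) (hhc : ContinuousOn h (Set.Icc 0 T))
    (hgh : ∀ t ∈ Set.Ioc (0:ℝ) T, g t < h t)
    (P : ℝ × ℝ → ℝ) (hPc : Continuous P) (hPb : ∃ MP, ∀ p, |P p| ≤ MP)
    (hPnn : ∀ p, 0 ≤ P p)
    (φ φt c : ℝ × ℝ → ℝ)
    (hφc : ContinuousOn φ
      {p : ℝ × ℝ | p.1 ∈ Set.Icc 0 T ∧ p.2 ∈ Set.Icc (g p.1) (h p.1)})
    (hderiv : ∀ t ∈ Set.Ioc (0:ℝ) T, ∀ x ∈ Set.Ioo (g t) (h t),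
      HasDerivAt (fun s => φ (s, x)) (φt (t, x)) t)
    (hcb : ∃ Mc, ∀ t ∈ Set.Ioc (0:ℝ) T, ∀ x ∈ Set.Ioo (g t) (h t), |c (t, x)| ≤ Mc)
    (hineq : ∀ t ∈ Set.Ioc (0:ℝ) T, ∀ x ∈ Set.Ioo (g t) (h t),
      d * (∫ y in Set.Ioo (g t) (h t), P (x, y) * φ (t, y)) + c (t, x) * φ (t, x) ≤
        φt (t, x))
    (hbg : ∀ t ∈ Set.Ioc (0:ℝ) T,
      (∃ ε > (0:ℝ), ∀ s ∈ Set.Ico (t - ε) t, g t < g s) → 0 ≤ φ (t, g t))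
    (hbh : ∀ t ∈ Set.Ioc (0:ℝ) T,
      (∃ ε > (0:ℝ), ∀ s ∈ Set.Ico (t - ε) t, h s < h t) → 0 ≤ φ (t, h t))
    (hinit : ∀ x ∈ Set.Icc (g 0) (h 0), 0 ≤ φ (0, x)) :
    ∀ t ∈ Set.Icc (0:ℝ) T, ∀ x ∈ Set.Icc (g t) (h t), 0 ≤ φ (t, x) := by
  obtain ⟨MP, hMP⟩ := hPb
  obtain ⟨Mc, hMc⟩ := hcb
  obtain ⟨L, hL⟩ := isCompact_Icc.bddAbove_image (hhc.sub hgc)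
  have hw := nonneg_of_growth_near_negative_min
    (w := fun p => Real.exp (-((Mc + 4 * (d * MP * L + 1)) * p.1)) * φ p) hgc hhc hgh
    ((Real.continuous_exp.comp (continuous_const.mul continuous_fst).neg).continuousOn.mul hφc)
    (exists_growth_of_exp_neg_mul hd.le hPc hPnn (fun p => (le_abs_self _).trans (hMP p)) hφc hderiv
      (fun t ht x hx => (le_abs_self _).trans (hMc t ht x hx))
      (fun t ht => hL (mem_image_of_mem _ ht)) le_rfl hineq)
    (fun t ht hstrict => mul_nonneg (Real.exp_pos _).le (hbg t ht hstrict))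
    (fun t ht hstrict => mul_nonneg (Real.exp_pos _).le (hbh t ht hstrict))
    (fun x hx => by simpa using hinit x hx)
  exact fun t ht x hx => nonneg_of_mul_nonneg_right (hw (t, x) ⟨ht, hx⟩) (Real.exp_pos _)

/-- Maximum principle for a nonlocal evolution inequality on a moving domain: if
`φ_t ≥ d ∫_{g(t)}^{h(t)} P(x,y) φ(t,y) dy + c(t,x) φ(t,x)` in
`D_T = {(t,x) : 0 < t ≤ T, g(t) < x < h(t)}`, with `φ ≥ 0` initially, on the moving
boundary points where `g` strictly decreases (resp. `h` strictly increases) from the left,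
then `φ ≥ 0` on the closure of `D_T`. -/
theorem stmt16 (T d : ℝ) (hT : 0 < T) (hd : 0 < d)
    (g h : ℝ → ℝ) (hgc : ContinuousOn g (Set.Icc 0 T)) (hhc : ContinuousOn h (Set.Icc 0 T))
    (hgh0 : g 0 ≤ h 0) (hgh : ∀ t ∈ Set.Ioc (0:ℝ) T, g t < h t)
    (P : ℝ × ℝ → ℝ) (hPc : Continuous P) (hPb : ∃ MP, ∀ p, |P p| ≤ MP)
    (hPnn : ∀ p, 0 ≤ P p)
    (hPdiag : ∀ᵐ x ∂(volume : Measure ℝ), 0 < P (x, x))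
    (φ φt c : ℝ × ℝ → ℝ)
    (hφc : ContinuousOn φ
      {p : ℝ × ℝ | p.1 ∈ Set.Icc 0 T ∧ p.2 ∈ Set.Icc (g p.1) (h p.1)})
    (hφtc : ContinuousOn φt
      {p : ℝ × ℝ | p.1 ∈ Set.Icc 0 T ∧ p.2 ∈ Set.Icc (g p.1) (h p.1)})
    (hderiv : ∀ t ∈ Set.Ioc (0:ℝ) T, ∀ x ∈ Set.Ioo (g t) (h t),
      HasDerivAt (fun s => φ (s, x)) (φt (t, x)) t)
    (hcb : ∃ Mc, ∀ t ∈ Set.Ioc (0:ℝ) T, ∀ x ∈ Set.Ioo (g t) (h t), |c (t, x)| ≤ Mc)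
    (hineq : ∀ t ∈ Set.Ioc (0:ℝ) T, ∀ x ∈ Set.Ioo (g t) (h t),
      d * (∫ y in Set.Ioo (g t) (h t), P (x, y) * φ (t, y)) + c (t, x) * φ (t, x) ≤
        φt (t, x))
    (hbg : ∀ t ∈ Set.Ioc (0:ℝ) T,
      (∃ ε > (0:ℝ), ∀ s ∈ Set.Ico (t - ε) t, g t < g s) → 0 ≤ φ (t, g t))
    (hbh : ∀ t ∈ Set.Ioc (0:ℝ) T,
      (∃ ε > (0:ℝ), ∀ s ∈ Set.Ico (t - ε) t, h s < h t) → 0 ≤ φ (t, h t))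
    (hinit : ∀ x ∈ Set.Icc (g 0) (h 0), 0 ≤ φ (0, x)) :
    ∀ t ∈ Set.Icc (0:ℝ) T, ∀ x ∈ Set.Icc (g t) (h t), 0 ≤ φ (t, x) :=
  stmt16_general T d hd g h hgc hhc hgh P hPc hPb hPnn φ φt c hφc hderiv hcb hineq hbg hbh hinit
end

section
/- Let J₁ ∈ C(ℝ) ∩ L^∞(ℝ) be even, nonnegative, with J₁(0) > 0 and ∫_ℝ J₁ = 1. For 0 < L₁ < L₂ define ψ(x) = min{1, (L₂ - |x|)/L₁}. Then for any ε > 0 there exists L_ε > 0 (depending only on J₁ and ε) such that whenever L₁ ≥ L_ε and L₂ - L₁ ≥ L_ε, one has ∫_0^{L₂} J₁(x - y) ψ(y) dy ≥ (1 - ε) ψ(x) for all x ∈ [L_ε, L₂]. -/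
open MeasureTheory intervalIntegral

/-
Choose `R` so that `J₁` has mass `m > 1 - ε/2` on `[-R, R]`. On `[0, L₂]` the trapezoid `ψ` equals
`ψ⁺ = max 0 ψ`, which vanishes beyond `L₂`, so for `x ≥ R` the integral dominates the integral of
`J₁(x - y) ψ⁺(y)` over the window `[x - R, x + R] ⊆ [0, ∞)`. Since `J₁` is even, that window integral
only sees `ψ⁺(x - t) + ψ⁺(x + t) ≥ 2 (1 - ε/2) ψ(x)`: on the slope of the trapezoid the sum is at
least `2 ψ(x)`, and where the window meets the plateau the slope `1/L₁ ≤ ε/(4R)` costs at most `ε/2`.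
-/

lemma exists_pos_lt_intervalIntegral_neg {f : ℝ → ℝ} (hf : Integrable f) {a : ℝ}
    (ha : a < ∫ x, f x) : ∃ R > 0, a < ∫ x in -R..R, f x := by
  have hlim := intervalIntegral_tendsto_integral hf Filter.tendsto_neg_atTop_atBot
    Filter.tendsto_id
  exact ((Filter.eventually_gt_atTop 0).and (hlim.eventually (eventually_gt_nhds ha))).exists

lemma intervalIntegral_neg_le_integral {f : ℝ → ℝ} (hf : Integrable f) (hnn : ∀ x, 0 ≤ f x)
    {R : ℝ} (hR : 0 ≤ R) : ∫ x in -R..R, f x ≤ ∫ x, f x := by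
  rw [integral_of_le (by linarith)]
  exact setIntegral_le_integral hf (.of_forall hnn)

-- An even kernel only sees the symmetrization `(f t + f (-t)) / 2` of `f`.
lemma mul_intervalIntegral_le_of_even {J f : ℝ → ℝ} (hJ : Continuous J) (hf : Continuous f)
    (heven : ∀ t, J (-t) = J t) (hnn : ∀ t, 0 ≤ J t) {R c : ℝ} (hR : 0 ≤ R)
    (hcf : ∀ t ∈ Set.Icc (-R) R, 2 * c ≤ f t + f (-t)) :
    c * ∫ t in -R..R, J t ≤ ∫ t in -R..R, J t * f t := by
  have hreflect : ∫ t in -R..R, J t * f t = ∫ t in -R..R, J t * f (-t) := by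
    simpa [heven] using (integral_comp_neg (a := -R) (b := R) fun t => J t * f t).symm
  have hsum : ∫ t in -R..R, J t * (2 * c) ≤ ∫ t in -R..R, J t * (f t + f (-t)) := by
    refine integral_mono_on (by linarith) (Continuous.intervalIntegrable (by fun_prop) _ _)
      (Continuous.intervalIntegrable (by fun_prop) _ _) fun t ht => ?_
    nlinarith [hnn t, hcf t ht]
  simp only [mul_add] at hsum
  rw [intervalIntegral.integral_mul_const, intervalIntegral.integral_add
    (Continuous.intervalIntegrable (by fun_prop) _ _)
    (Continuous.intervalIntegrable (by fun_prop) _ _), ← hreflect] at hsum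
  linarith

lemma intervalIntegral_mono_interval_of_eq_zero_Ici {g : ℝ → ℝ} (hg : Continuous g)
    (hnn : ∀ y, 0 ≤ g y)
    {a a' b b' : ℝ} (ha : a ≤ a') (ha' : a' ≤ b') (hzero : ∀ y, b ≤ y → g y = 0) :
    ∫ y in a'..b', g y ≤ ∫ y in a..b, g y := by
  have htail : ∫ y in b..max b b', g y = 0 := by
    rw [integral_congr (g := fun _ => 0) fun y hy => hzero y ?_, intervalIntegral.integral_zero]
    rw [Set.uIcc_of_le (le_max_left _ _)] at hy
    exact hy.1
  calc ∫ y in a'..b', g y ≤ ∫ y in a..max b b', g y :=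
        integral_mono_interval ha ha' (le_max_right _ _) (.of_forall hnn)
          (hg.intervalIntegrable _ _)
    _ = ∫ y in a..b, g y := by
        rw [← integral_add_adjacent_intervals (hg.intervalIntegrable _ _)
          (hg.intervalIntegrable _ _), htail, add_zero]

noncomputable def trapezoid (L₁ L₂ y : ℝ) : ℝ := min 1 ((L₂ - |y|) / L₁)

@[fun_prop]
lemma continuous_trapezoid (L₁ L₂ : ℝ) : Continuous (trapezoid L₁ L₂) := by
  unfold trapezoid; fun_prop

lemma trapezoid_nonneg {L₁ L₂ y : ℝ} (hL₁ : 0 ≤ L₁) (hy : |y| ≤ L₂) : 0 ≤ trapezoid L₁ L₂ y :=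
  le_min zero_le_one (div_nonneg (by linarith) hL₁)

lemma trapezoid_nonpos {L₁ L₂ y : ℝ} (hL₁ : 0 ≤ L₁) (hy : L₂ ≤ |y|) : trapezoid L₁ L₂ y ≤ 0 :=
  (min_le_right _ _).trans (div_nonpos_of_nonpos_of_nonneg (by linarith) hL₁)

lemma two_mul_min_one_le_of_abs_le {u s δ : ℝ} (hu : 0 ≤ u) (hδ : 0 ≤ δ) (hs : 2 * |s| ≤ δ) :
    2 * ((1 - δ) * min 1 u) ≤ max 0 (min 1 (u + s)) + max 0 (min 1 (u - s)) := by
  obtain ⟨hs1, hs2⟩ := abs_le.mp (show |s| ≤ δ / 2 by linarith)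
  simp only [min_def, max_def]
  split_ifs <;> nlinarith

lemma two_mul_trapezoid_le {L₁ L₂ x t δ : ℝ} (hL₁ : 0 < L₁) (hδ : 0 ≤ δ) (htx : |t| ≤ x)
    (hxL₂ : x ≤ L₂) (ht : 2 * |t| ≤ δ * L₁) :
    2 * ((1 - δ) * trapezoid L₁ L₂ x) ≤
      max 0 (trapezoid L₁ L₂ (x - t)) + max 0 (trapezoid L₁ L₂ (x + t)) := by
  obtain ⟨ht₁, ht₂⟩ := abs_le.mp htx
  have hx : trapezoid L₁ L₂ x = min 1 ((L₂ - x) / L₁) := by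
    rw [trapezoid, abs_of_nonneg (by linarith)]
  have hsub : trapezoid L₁ L₂ (x - t) = min 1 ((L₂ - x) / L₁ + t / L₁) := by
    rw [trapezoid, abs_of_nonneg (by linarith)]; ring_nf
  have hadd : trapezoid L₁ L₂ (x + t) = min 1 ((L₂ - x) / L₁ - t / L₁) := by
    rw [trapezoid, abs_of_nonneg (by linarith)]; ring_nf
  rw [hx, hsub, hadd]
  refine two_mul_min_one_le_of_abs_le (div_nonneg (by linarith) hL₁.le) hδ ?_
  rwa [abs_div, abs_of_pos hL₁, mul_div_assoc', div_le_iff₀ hL₁]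

theorem stmt19_general (J₁ : ℝ → ℝ) (hc : Continuous J₁)
    (heven : ∀ x, J₁ (-x) = J₁ x) (hnn : ∀ x, 0 ≤ J₁ x)
    (hint : (∫ x : ℝ, J₁ x) = 1)
    (ε : ℝ) (hε : 0 < ε) :
    ∃ Lε > (0:ℝ), ∀ L₁ L₂ : ℝ, 0 < L₁ → L₁ < L₂ → Lε ≤ L₁ → Lε ≤ L₂ - L₁ →
      ∀ x ∈ Set.Icc Lε L₂,
        (1 - ε) * min 1 ((L₂ - |x|) / L₁) ≤
          ∫ y in (0:ℝ)..L₂, J₁ (x - y) * min 1 ((L₂ - |y|) / L₁) := by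
  have hJ : Integrable J₁ := .of_integral_ne_zero (by rw [hint]; exact one_ne_zero)
  obtain ⟨R, hR, hmass⟩ :=
    exists_pos_lt_intervalIntegral_neg hJ (a := 1 - ε / 2) (by linarith)
  have hmass_le : ∫ t in -R..R, J₁ t ≤ 1 := hint ▸ intervalIntegral_neg_le_integral hJ hnn hR.le
  refine ⟨max R (4 * R / ε), by positivity, fun L₁ L₂ hL₁ _ hL₁R _ x hx => ?_⟩
  obtain ⟨hRx, hxL₂⟩ : R ≤ x ∧ x ≤ L₂ := ⟨(le_max_left _ _).trans hx.1, hx.2⟩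
  have hRL₁ : 2 * R ≤ ε / 2 * L₁ := by
    have := (le_max_right _ _).trans hL₁R
    rw [div_le_iff₀ hε] at this
    linarith
  have hψx : 0 ≤ trapezoid L₁ L₂ x :=
    trapezoid_nonneg hL₁.le (by rw [abs_of_nonneg] <;> linarith)
  -- `(1 - ε/2) m - (1 - ε) = (m - (1 - ε/2)) + (ε/2) (1 - m)` for the mass `m` of `[-R, R]`
  have hfactor : 1 - ε ≤ (1 - ε / 2) * ∫ t in -R..R, J₁ t := by nlinarith
  calc (1 - ε) * trapezoid L₁ L₂ x
      ≤ (1 - ε / 2) * trapezoid L₁ L₂ x * ∫ t in -R..R, J₁ t := by nlinarith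
    _ ≤ ∫ t in -R..R, J₁ t * max 0 (trapezoid L₁ L₂ (x - t)) :=
        mul_intervalIntegral_le_of_even hc (by fun_prop) heven hnn hR.le fun t ht => by
          have ht' := abs_le.mpr ht
          simpa [mul_assoc] using
            two_mul_trapezoid_le hL₁ (by positivity) (ht'.trans hRx) hxL₂ (by linarith)
    _ = ∫ y in x - R..x + R, J₁ (x - y) * max 0 (trapezoid L₁ L₂ y) := by
        simpa using (integral_comp_sub_left (a := x - R) (b := x + R)
          (fun t => J₁ t * max 0 (trapezoid L₁ L₂ (x - t))) x).symm
    _ ≤ ∫ y in 0..L₂, J₁ (x - y) * max 0 (trapezoid L₁ L₂ y) :=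
        intervalIntegral_mono_interval_of_eq_zero_Ici (by fun_prop)
          (fun y => mul_nonneg (hnn _) (le_max_left _ _)) (by linarith) (by linarith)
          fun y hy => by rw [max_eq_left (trapezoid_nonpos hL₁.le (hy.trans (le_abs_self y))),
            mul_zero]
    _ = ∫ y in 0..L₂, J₁ (x - y) * trapezoid L₁ L₂ y := integral_congr fun y hy => by
        rw [Set.uIcc_of_le (by linarith)] at hy
        rw [max_eq_right (trapezoid_nonneg hL₁.le (by rw [abs_of_nonneg hy.1]; exact hy.2))]

/-- Nonlocal sub-eigenfunction estimate for the trapezoid `ψ(x) = min{1, (L₂-|x|)/L₁}`: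
for any `ε > 0` there is `L_ε > 0` (depending only on `J₁` and `ε`) such that whenever
`L₁ ≥ L_ε` and `L₂ - L₁ ≥ L_ε`, one has
`∫_0^{L₂} J₁(x-y) ψ(y) dy ≥ (1-ε) ψ(x)` for all `x ∈ [L_ε, L₂]`. -/
theorem stmt19 (J₁ : ℝ → ℝ) (hc : Continuous J₁) (hb : ∃ M, ∀ x, |J₁ x| ≤ M)
    (heven : ∀ x, J₁ (-x) = J₁ x) (hnn : ∀ x, 0 ≤ J₁ x) (h0 : 0 < J₁ 0)
    (hint : (∫ x : ℝ, J₁ x) = 1)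
    (ε : ℝ) (hε : 0 < ε) :
    ∃ Lε > (0:ℝ), ∀ L₁ L₂ : ℝ, 0 < L₁ → L₁ < L₂ → Lε ≤ L₁ → Lε ≤ L₂ - L₁ →
      ∀ x ∈ Set.Icc Lε L₂,
        (1 - ε) * min 1 ((L₂ - |x|) / L₁) ≤
          ∫ y in (0:ℝ)..L₂, J₁ (x - y) * min 1 ((L₂ - |y|) / L₁) :=
  stmt19_general J₁ hc heven hnn hint ε hε
end
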